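/- arXiv:2604.00713 — 8 statements merged into one kernel-verified Lean document; each statement's English description precedes it below -/
import Mathlib

section
/- Let R be a principal ideal domain, M a flat R-module, and A, B pure submodules of M. Then A ∩ B is a pure submodule of M. -/
open TensorProduct

universe u v w

/-- A submodule `N` of an `R`-module `M` is pure if for every `R`-module `A`
the induced map `N ⊗[R] A → M ⊗[R] A` is injective. -/
def IsPureSubmodule {R : Type u} {M : Type v} [CommRing R] [AddCommGroup M] [Module R M]
    (N : Submodule R M) : Prop :=
  ∀ (A : Type (max u v)) [AddCommGroup A] [Module R A],
    Function.Injective (TensorProduct.map N.subtype (LinearMap.id : A →ₗ[R] A))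

/-- `N` is a pure submodule of the submodule `D`. -/
def IsPureIn {R : Type u} {M : Type v} [CommRing R] [AddCommGroup M] [Module R M]
    (N D : Submodule R M) : Prop :=
  ∃ h : N ≤ D, ∀ (A : Type (max u v)) [AddCommGroup A] [Module R A],
    Function.Injective (TensorProduct.map (Submodule.inclusion h) (LinearMap.id : A →ₗ[R] A))

/-- A submodule `D` of a coalgebra `C` is a subcoalgebra if `Δ` maps `D` into the image
of the canonical map `D ⊗ D → C ⊗ C`. -/
def IsSubcoalg {R C : Type*} [CommRing R] [AddCommGroup C] [Module R C] [Coalgebra R C]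
    (D : Submodule R C) : Prop :=
  ∀ x ∈ D, Coalgebra.comul (R := R) x ∈ LinearMap.range (TensorProduct.map D.subtype D.subtype)

/-- `g` is group-like: `Δ g = g ⊗ g` and `ε g = 1`. -/
def IsGroupLike (R : Type*) {C : Type*} [CommRing R] [AddCommGroup C] [Module R C]
    [Coalgebra R C] (g : C) : Prop :=
  Coalgebra.comul (R := R) g = g ⊗ₜ[R] g ∧ Coalgebra.counit (R := R) g = 1

/-- The coalgebra `C` is cocommutative. -/
def IsCocomm (R C : Type*) [CommRing R] [AddCommGroup C] [Module R C] [Coalgebra R C] : Prop :=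
  ∀ x : C, TensorProduct.comm R C C (Coalgebra.comul (R := R) x) = Coalgebra.comul (R := R) x

/-- A pure simple subcoalgebra: nonzero, pure, and the only pure subcoalgebras contained in
it are `0` and itself. -/
def IsPureSimple {R C : Type*} [CommRing R] [AddCommGroup C] [Module R C] [Coalgebra R C]
    (S : Submodule R C) : Prop :=
  S ≠ ⊥ ∧ IsPureSubmodule S ∧ IsSubcoalg S ∧
    ∀ T : Submodule R C, IsPureSubmodule T → IsSubcoalg T → T ≤ S → T = ⊥ ∨ T = S

/-- A submodule is free of rank one: spanned by a single element with trivial annihilator. -/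
def IsFreeRankOne {R C : Type*} [CommRing R] [AddCommGroup C] [Module R C]
    (S : Submodule R C) : Prop :=
  ∃ g : C, S = Submodule.span R {g} ∧ ∀ r : R, r • g = 0 → r = 0

/-- A flat coalgebra is pointed if every pure simple subcoalgebra is free of rank one. -/
def IsPointed (R C : Type*) [CommRing R] [AddCommGroup C] [Module R C] [Coalgebra R C] : Prop :=
  ∀ S : Submodule R C, IsPureSimple S → IsFreeRankOne S

/-- A nonzero coalgebra is pure irreducible if any two nonzero pure subcoalgebras have
nonzero intersection. -/
def IsPureIrred (R C : Type*) [CommRing R] [AddCommGroup C] [Module R C] [Coalgebra R C] : Prop :=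
  Nontrivial C ∧
    ∀ D E : Submodule R C, IsPureSubmodule D → IsSubcoalg D → D ≠ ⊥ →
      IsPureSubmodule E → IsSubcoalg E → E ≠ ⊥ → D ⊓ E ≠ ⊥

/-- A subcoalgebra `D` of `C` is pure irreducible if it is nonzero and any two nonzero
subcoalgebras of `C` that are pure in `D` have nonzero intersection. -/
def IsPureIrredSub {R C : Type*} [CommRing R] [AddCommGroup C] [Module R C] [Coalgebra R C]
    (D : Submodule R C) : Prop :=
  IsSubcoalg D ∧ D ≠ ⊥ ∧
    ∀ U V : Submodule R C, IsSubcoalg U → IsSubcoalg V →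
      IsPureIn U D → IsPureIn V D → U ≠ ⊥ → V ≠ ⊥ → U ⊓ V ≠ ⊥

/-- A pure irreducible component: a maximal element among the pure irreducible
subcoalgebras of `C`. -/
def IsPureIrredComponent {R C : Type*} [CommRing R] [AddCommGroup C] [Module R C] [Coalgebra R C]
    (D : Submodule R C) : Prop :=
  IsPureIrredSub D ∧ ∀ E : Submodule R C, IsPureIrredSub E → D ≤ E → E = D

/-- A pure simple subcoalgebra of a subcoalgebra `D` of `C`. -/
def IsPureSimpleIn {R C : Type*} [CommRing R] [AddCommGroup C] [Module R C] [Coalgebra R C]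
    (S D : Submodule R C) : Prop :=
  S ≠ ⊥ ∧ IsSubcoalg S ∧ IsPureIn S D ∧
    ∀ T : Submodule R C, IsSubcoalg T → IsPureIn T D → T ≤ S → T = ⊥ ∨ T = S

/-- A subcoalgebra `D` of `C` is pointed. -/
def IsPointedIn {R C : Type*} [CommRing R] [AddCommGroup C] [Module R C] [Coalgebra R C]
    (D : Submodule R C) : Prop :=
  ∀ S : Submodule R C, IsPureSimpleIn S D → IsFreeRankOne S

/-- The wedge `U ∧ V` of two submodules of a coalgebra: the kernel of
`(π_U ⊗ π_V) ∘ Δ : C → (C/U) ⊗ (C/V)`. -/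
noncomputable def wedge {R C : Type*} [CommRing R] [AddCommGroup C] [Module R C] [Coalgebra R C]
    (U V : Submodule R C) : Submodule R C :=
  LinearMap.ker ((TensorProduct.map U.mkQ V.mkQ).comp (Coalgebra.comul (R := R) (A := C)))

universe w'

section Aux
open LinearMap
variable {R : Type u} [CommRing R]

/-- Flat modules over a domain are torsion-free. -/
lemma aux_flat_torsionFree [IsDomain R] {M : Type v} [AddCommGroup M] [Module R M]
    [Module.Flat R M] {r : R} (hr : r ≠ 0) {x : M} (h : r • x = 0) : x = 0 := by
  have hinj : Function.Injective (LinearMap.lsmul R R r) := by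
    intro a b hab
    simpa [lsmul_apply] using mul_left_cancel₀ hr (by simpa [lsmul_apply, smul_eq_mul] using hab)
  have H := Module.Flat.lTensor_preserves_injective_linearMap (M := M)
    (LinearMap.lsmul R R r) hinj
  have h1 : (LinearMap.lsmul R R r).lTensor M (x ⊗ₜ[R] (1 : R)) = 0 := by
    simp only [lTensor_tmul, lsmul_apply, smul_eq_mul, mul_one]
    have hx : x ⊗ₜ[R] r = (r • x) ⊗ₜ[R] (1 : R) := by rw [smul_tmul, smul_eq_mul, mul_one]
    rw [hx, h, zero_tmul]
  have h2 : x ⊗ₜ[R] (1 : R) = (0 : M ⊗[R] R) := H (by simpa using h1)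
  have := congrArg (TensorProduct.rid R M) h2
  simpa using this

/-- Torsion-free modules over a PID are flat. -/
lemma aux_torsionFree_flat [IsDomain R] [IsPrincipalIdealRing R] {Q : Type w} [AddCommGroup Q]
    [Module R Q] (tf : ∀ (r : R), r ≠ 0 → ∀ q : Q, r • q = 0 → q = 0) : Module.Flat R Q := by
  rw [Module.Flat.iff_rTensor_injective']
  intro I
  obtain ⟨r, rfl⟩ := Submodule.IsPrincipal.principal I
  rcases eq_or_ne r 0 with rfl | hr
  · have hsub : Subsingleton (Submodule.span R ({(0:R)} : Set R)) := by
      constructor; rintro ⟨a, ha⟩ ⟨b, hb⟩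
      rw [Submodule.span_singleton_eq_bot.mpr rfl, Submodule.mem_bot] at ha hb
      subst ha; subst hb; rfl
    intro a b _
    exact Subsingleton.elim a b
  · set I := Ideal.span {r} with hI
    have hrI : r ∈ I := Ideal.subset_span rfl
    -- the equivalence R ≃ I sending s to s • r
    have hφbij : Function.Bijective (LinearMap.toSpanSingleton R I ⟨r, hrI⟩) := by
      constructor
      · intro a b hab
        have : a • r = b • r := congrArg Subtype.val hab
        exact mul_right_cancel₀ hr (by simpa [smul_eq_mul] using this)
      · rintro ⟨y, hy⟩
        rw [hI, Ideal.mem_span_singleton'] at hy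
        obtain ⟨s, rfl⟩ := hy
        exact ⟨s, by ext; simp [LinearMap.toSpanSingleton_apply, smul_eq_mul]⟩
    set e := LinearEquiv.ofBijective _ hφbij with he
    have hcomp : I.subtype ∘ₗ (e : R →ₗ[R] I) = LinearMap.toSpanSingleton R R r := by
      ext s
      simp [e, LinearMap.toSpanSingleton_apply, smul_eq_mul]
    have hμ : Function.Injective ((LinearMap.toSpanSingleton R R r).rTensor Q) := by
      have hEq : (LinearMap.toSpanSingleton R R r).rTensor Q =
          (TensorProduct.lid R Q).symm.toLinearMap ∘ₗ (LinearMap.lsmul R Q r) ∘ₗ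
            (TensorProduct.lid R Q).toLinearMap := by
        apply TensorProduct.ext'
        intro s q
        simp only [rTensor_tmul, LinearMap.toSpanSingleton_apply, coe_comp,
          LinearEquiv.coe_coe, Function.comp_apply, lid_tmul, lsmul_apply, lid_symm_apply,
          smul_eq_mul]
        rw [smul_smul, tmul_smul, smul_tmul', smul_eq_mul, mul_one, mul_comm]
      rw [hEq]
      intro a b hab
      simp only [coe_comp, LinearEquiv.coe_coe, Function.comp_apply] at hab
      have h2 := (TensorProduct.lid R Q).symm.injective hab
      simp only [lsmul_apply] at h2
      have h3 : r • ((TensorProduct.lid R Q) a - (TensorProduct.lid R Q) b) = 0 := by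
        rw [smul_sub, h2, sub_self]
      exact (TensorProduct.lid R Q).injective (sub_eq_zero.mp (tf r hr _ h3))
    have hfact : I.subtype.rTensor Q ∘ₗ ((e : R →ₗ[R] I).rTensor Q) =
        (LinearMap.toSpanSingleton R R r).rTensor Q := by
      rw [← rTensor_comp, hcomp]
    intro a b hab
    have hes : Function.Surjective ((e : R →ₗ[R] I).rTensor Q) :=
      LinearMap.rTensor_surjective Q e.surjective
    obtain ⟨a', rfl⟩ := hes a
    obtain ⟨b', rfl⟩ := hes b
    have : (LinearMap.toSpanSingleton R R r).rTensor Q a' =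
        (LinearMap.toSpanSingleton R R r).rTensor Q b' := by
      rw [← hfact]; simpa using hab
    rw [hμ this]


lemma aux_pure_saturated {R : Type u} [CommRing R] [IsDomain R] {M : Type v} [AddCommGroup M]
    [Module R M] [Module.Flat R M] {A : Submodule R M}
    (hA : IsPureSubmodule A) {r : R} (hr : r ≠ 0) {x : M} (hx : r • x ∈ A) : x ∈ A := by
  set I := Ideal.span {r} with hIdef
  have hinj := hA (ULift.{v} (R ⧸ I))
  set a : A := ⟨r • x, hx⟩ with ha
  have h0 : TensorProduct.map A.subtype (LinearMap.id : ULift.{v} (R ⧸ I) →ₗ[R] _)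
      (a ⊗ₜ ULift.up 1) = 0 := by
    simp only [map_tmul, Submodule.coe_subtype, LinearMap.id_coe, id_eq, ha]
    have h1 : (r • x) ⊗ₜ[R] (ULift.up (1 : R ⧸ I)) =
        x ⊗ₜ[R] (r • ULift.up (1 : R ⧸ I)) := smul_tmul r x _
    have hr0 : r • (ULift.up (1 : R ⧸ I)) = 0 := by
      apply ULift.ext
      show r • (1 : R ⧸ I) = 0
      have : (1 : R ⧸ I) = Submodule.Quotient.mk (1 : R) := rfl
      rw [this, ← Submodule.Quotient.mk_smul, smul_eq_mul, mul_one,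
        Submodule.Quotient.mk_eq_zero]
      exact Ideal.subset_span rfl
    rw [h1, hr0, tmul_zero]
  have ht : a ⊗ₜ[R] (ULift.up (1 : R ⧸ I)) = 0 := hinj (by simpa using h0)
  have ht3 : a ⊗ₜ[R] (1 : R ⧸ I) = (0 : A ⊗[R] (R ⧸ I)) := by
    have := congrArg (LinearMap.lTensor A
      (ULift.moduleEquiv (R := R) (M := R ⧸ I)).toLinearMap) ht
    simpa using this
  have ht4 : a ∈ (I • ⊤ : Submodule R A) := by
    have h5 := congrArg (TensorProduct.tensorQuotEquivQuotSMul A I) ht3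
    rw [show (1 : R ⧸ I) = Ideal.Quotient.mk I 1 from rfl,
      TensorProduct.tensorQuotEquivQuotSMul_tmul_mk, map_zero, one_smul,
      Submodule.Quotient.mk_eq_zero] at h5
    exact h5
  have hle : (I • ⊤ : Submodule R A) ≤ LinearMap.range (LinearMap.lsmul R A r) := by
    rw [Submodule.smul_le]
    intro c hc m _
    rw [hIdef, Ideal.mem_span_singleton'] at hc
    obtain ⟨s, rfl⟩ := hc
    exact ⟨s • m, by rw [lsmul_apply, smul_smul, mul_comm]⟩
  obtain ⟨b, hb⟩ := hle ht4
  have hba : r • (b : M) = r • x := by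
    have := congrArg (Subtype.val) hb
    simpa [ha] using this
  have h6 : r • ((b : M) - x) = 0 := by rw [smul_sub, hba, sub_self]
  have hbx : (b : M) = x := sub_eq_zero.mp (aux_flat_torsionFree hr h6)
  rw [← hbx]; exact b.2

set_option maxHeartbeats 1000000 in
lemma aux_chase {R : Type u} [CommRing R] {M : Type v} [AddCommGroup M] [Module R M]
    (N : Submodule R M) [Module.Flat R (M ⧸ N)] {X : Type w} [AddCommGroup X] [Module R X]
    {F : Type w'} [AddCommGroup F] [Module R F] [Module.Flat R F]
    (π : F →ₗ[R] X) (hπ : Function.Surjective π) :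
    Function.Injective (TensorProduct.map N.subtype (LinearMap.id : X →ₗ[R] X)) := by
  set K := LinearMap.ker π with hK
  have hexK : Function.Exact K.subtype π := π.exact_subtype_ker_map
  have hmapeq : TensorProduct.map N.subtype (LinearMap.id : X →ₗ[R] X) =
      LinearMap.rTensor X N.subtype := rfl
  rw [hmapeq, injective_iff_map_eq_zero]
  intro t ht
  obtain ⟨s, rfl⟩ := LinearMap.lTensor_surjective (↥N) hπ t
  set s' := rTensor F N.subtype s with hs'
  have hcomm1 : lTensor M π s' = rTensor X N.subtype (lTensor (↥N) π s) := by
    rw [hs', ← comp_apply, ← comp_apply, lTensor_comp_rTensor, rTensor_comp_lTensor]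
  have hexMF : Function.Exact (lTensor M K.subtype) (lTensor M π) := lTensor_exact M hexK hπ
  obtain ⟨u, hu⟩ := (hexMF s').mp (by rw [hcomm1, ht])
  have hp0 : rTensor K N.mkQ u = 0 := by
    have hinj := Module.Flat.lTensor_preserves_injective_linearMap (M := M ⧸ N) K.subtype
      (Submodule.injective_subtype K)
    apply hinj
    rw [map_zero]
    have e1 : lTensor (M ⧸ N) K.subtype (rTensor K N.mkQ u) =
        rTensor F N.mkQ (lTensor M K.subtype u) := by
      rw [← comp_apply, ← comp_apply, lTensor_comp_rTensor, rTensor_comp_lTensor]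
    rw [e1, hu, hs', ← comp_apply, ← rTensor_comp]
    have hz : N.mkQ ∘ₗ N.subtype = 0 := by ext n; simp
    rw [hz]
    simp
  have hexNK : Function.Exact (rTensor K N.subtype) (rTensor K N.mkQ) :=
    rTensor_exact K (LinearMap.exact_subtype_mkQ N) (Submodule.mkQ_surjective N)
  obtain ⟨v, hv⟩ := (hexNK u).mp hp0
  have hinjF := Module.Flat.rTensor_preserves_injective_linearMap (M := F) N.subtype
    (Submodule.injective_subtype N)
  have hsv : lTensor (↥N) K.subtype v = s := by
    apply hinjF
    have e2 : rTensor F N.subtype (lTensor (↥N) K.subtype v) =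
        lTensor M K.subtype (rTensor K N.subtype v) := by
      rw [← comp_apply, ← comp_apply, lTensor_comp_rTensor, rTensor_comp_lTensor]
    rw [e2, hv, hu, hs']
  rw [← hsv, ← comp_apply, ← lTensor_comp]
  have hz2 : π ∘ₗ K.subtype = 0 := by ext k; exact k.2
  rw [hz2]
  simp

set_option maxHeartbeats 1000000 in
lemma aux_flatQuot_pure {R : Type u} [CommRing R] {M : Type v} [AddCommGroup M] [Module R M]
    (N : Submodule R M) [Module.Flat R (M ⧸ N)] (X : Type w) [AddCommGroup X] [Module R X] :
    Function.Injective (TensorProduct.map N.subtype (LinearMap.id : X →ₗ[R] X)) :=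
  aux_chase N (Finsupp.linearCombination R (id : X → X))
    (Finsupp.linearCombination_id_surjective R X)

end Aux

/-- Over a PID, the intersection of two pure submodules of a flat module is pure. -/
theorem intersection_of_pure_isPure {R : Type u} [CommRing R] [IsDomain R] [IsPrincipalIdealRing R]
    {M : Type v} [AddCommGroup M] [Module R M] [Module.Flat R M]
    {A B : Submodule R M} (hA : IsPureSubmodule A) (hB : IsPureSubmodule B) :
    IsPureSubmodule (A ⊓ B) := by
  have hflatQ : Module.Flat R (M ⧸ (A ⊓ B)) := by
    apply aux_torsionFree_flat
    intro r hr q hq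
    obtain ⟨x, rfl⟩ := Submodule.mkQ_surjective _ q
    rw [← map_smul, Submodule.mkQ_apply, Submodule.Quotient.mk_eq_zero] at hq
    rw [Submodule.mkQ_apply, Submodule.Quotient.mk_eq_zero]
    rw [Submodule.mem_inf] at hq ⊢
    exact ⟨aux_pure_saturated hA hr hq.1, aux_pure_saturated hB hr hq.2⟩
  intro X _ _
  exact aux_flatQuot_pure (A ⊓ B) X
end

section
/- Let R be a principal ideal domain, M a flat R-module, and A, B, C, D pure submodules of M. Then the canonical map (A ∩ B) ⊗_R (C ∩ D) → M ⊗_R M is injective, and its image equals the intersection of the image of the canonical map A ⊗_R C → M ⊗_R M with the image of the canonical map B ⊗_R D → M ⊗_R M. -/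
open TensorProduct

universe u v w

section AuxPure

open LinearMap

section Aux

/-- Over a PID (domain), a torsion-free module is flat. -/
theorem auxFlatOfTF {R : Type*} [CommRing R] [IsDomain R] [IsPrincipalIdealRing R]
    {N : Type*} [AddCommGroup N] [Module R N] [NoZeroSMulDivisors R N] :
    Module.Flat R N := by
  rw [Module.Flat.iff_rTensor_injective']
  intro I
  obtain ⟨a, ha⟩ := (IsPrincipalIdealRing.principal I).principal
  subst ha
  by_cases h : a = 0
  · subst h
    haveI : Subsingleton ↥(Submodule.span R {(0 : R)}) := by
      rw [Submodule.span_zero_singleton]; infer_instance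
    exact Function.injective_of_subsingleton _
  · set e := LinearEquiv.toSpanNonzeroSingleton R R a h with he
    have heq : (rTensor N (Submodule.span R {a}).subtype) ∘ₗ
        (LinearEquiv.rTensor N e).toLinearMap
        = (a • LinearMap.id : R ⊗[R] N →ₗ[R] R ⊗[R] N) := by
      apply TensorProduct.ext'
      intro r n
      have h1 : (LinearEquiv.rTensor N e) (r ⊗ₜ[R] n) = (e r : ↥(Submodule.span R {a})) ⊗ₜ[R] n := rfl
      simp only [LinearMap.coe_comp, Function.comp_apply, LinearEquiv.coe_coe, h1,
        rTensor_tmul, LinearMap.smul_apply, LinearMap.id_coe, id_eq]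
      rw [smul_tmul']
      congr 1
      show (r • a) = a • r
      rw [smul_eq_mul, smul_eq_mul, mul_comm]
    have hinj2 : Function.Injective (a • (LinearMap.id : R ⊗[R] N →ₗ[R] R ⊗[R] N)) := by
      intro x y hxy
      apply (TensorProduct.lid R N).injective
      apply smul_right_injective N h
      have h2 := congrArg (TensorProduct.lid R N) hxy
      simpa using h2
    intro x y hxy
    obtain ⟨x', rfl⟩ := (LinearEquiv.rTensor N e).surjective x
    obtain ⟨y', rfl⟩ := (LinearEquiv.rTensor N e).surjective y
    have h3 : ((rTensor N (Submodule.span R {a}).subtype) ∘ₗ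
        (LinearEquiv.rTensor N e).toLinearMap) x'
        = ((rTensor N (Submodule.span R {a}).subtype) ∘ₗ
        (LinearEquiv.rTensor N e).toLinearMap) y' := hxy
    rw [heq] at h3
    exact congrArg _ (hinj2 h3)

/-- A flat module over a domain is torsion-free. -/
theorem auxNZSD {R : Type*} [CommRing R] [IsDomain R] {M : Type*} [AddCommGroup M] [Module R M]
    [Module.Flat R M] : NoZeroSMulDivisors R M := by
  refine ⟨fun {r x} hrx => ?_⟩
  by_cases hr : r = 0
  · exact Or.inl hr
  right
  have hf : Function.Injective (LinearMap.lsmul R R r) := by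
    intro s t hst
    simp only [LinearMap.lsmul_apply, smul_eq_mul] at hst
    exact mul_left_cancel₀ hr hst
  have h2 := Module.Flat.lTensor_preserves_injective_linearMap (M := M) (LinearMap.lsmul R R r) hf
  have h3 : (LinearMap.lsmul R R r).lTensor M (x ⊗ₜ[R] 1) = 0 := by
    rw [lTensor_tmul]
    show x ⊗ₜ[R] (r • (1 : R)) = 0
    rw [tmul_smul, smul_tmul', hrx, zero_tmul]
  have h4 : x ⊗ₜ[R] (1 : R) = 0 := h2 (by rw [h3, map_zero])
  have h5 := congrArg (TensorProduct.rid R M) h4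
  simpa using h5

end Aux



/-- A pure submodule of a torsion-free module is divisibly closed. -/
theorem auxDivClosed {R : Type u} [CommRing R] {M : Type v} [AddCommGroup M] [Module R M]
    [NoZeroSMulDivisors R M] {P : Submodule R M} (hP : IsPureSubmodule P)
    {r : R} (hr : r ≠ 0) {x : M} (hx : r • x ∈ P) : x ∈ P := by
  set I : Ideal R := Ideal.span {r} with hI
  have inj := hP (ULift.{v} (R ⧸ I))
  set p : P := ⟨r • x, hx⟩ with hp
  have h1 : (TensorProduct.map P.subtype (LinearMap.id : ULift.{v} (R ⧸ I) →ₗ[R] ULift.{v} (R ⧸ I)))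
      (p ⊗ₜ[R] ULift.up 1) = 0 := by
    rw [TensorProduct.map_tmul]
    show (r • x) ⊗ₜ[R] (ULift.up (1 : R ⧸ I)) = 0
    rw [smul_tmul]
    have h0 : r • (ULift.up (1 : R ⧸ I)) = (0 : ULift.{v} (R ⧸ I)) := by
      show ULift.up (r • (1 : R ⧸ I)) = ULift.up (0 : R ⧸ I)
      congr 1
      rw [← Algebra.algebraMap_eq_smul_one, Ideal.Quotient.algebraMap_eq,
        Ideal.Quotient.eq_zero_iff_mem]
      exact Ideal.mem_span_singleton_self r
    rw [h0, tmul_zero]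
  have h2 : p ⊗ₜ[R] (ULift.up (1 : R ⧸ I)) = (0 : P ⊗[R] ULift.{v} (R ⧸ I)) :=
    inj (by rw [h1, map_zero])
  -- transfer to P ⧸ (I • ⊤)
  have h3 : (TensorProduct.tensorQuotEquivQuotSMul P I)
      ((LinearEquiv.lTensor P (ULift.moduleEquiv : ULift.{v} (R ⧸ I) ≃ₗ[R] R ⧸ I))
        (p ⊗ₜ[R] ULift.up 1)) = Submodule.Quotient.mk p := by
    have e1 : (LinearEquiv.lTensor P (ULift.moduleEquiv : ULift.{v} (R ⧸ I) ≃ₗ[R] R ⧸ I))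
        (p ⊗ₜ[R] ULift.up 1) = p ⊗ₜ[R] (1 : R ⧸ I) := rfl
    rw [e1]
    have e2 : (1 : R ⧸ I) = Ideal.Quotient.mk I 1 := rfl
    rw [TensorProduct.tensorQuotEquivQuotSMul, LinearEquiv.trans_apply, e2]
    show (TensorProduct.quotTensorEquivQuotSMul P I) ((Ideal.Quotient.mk I 1) ⊗ₜ[R] p) = _
    rw [TensorProduct.quotTensorEquivQuotSMul_mk_tmul, one_smul]
  rw [h2, map_zero, map_zero] at h3
  have h4 : p ∈ I • (⊤ : Submodule R P) := (Submodule.Quotient.mk_eq_zero _).mp h3.symm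
  rw [hI, Submodule.ideal_span_singleton_smul] at h4
  rw [← SetLike.mem_coe, Submodule.coe_pointwise_smul] at h4
  obtain ⟨q, -, hq⟩ := Set.mem_smul_set.mp h4
  have h5 : r • (q : M) = r • x := by
    have := congrArg (Submodule.subtype P) hq
    simpa [hp] using this
  have h6 : (q : M) = x := by
    have h7 : r • ((q : M) - x) = 0 := by rw [smul_sub, h5, sub_self]
    exact sub_eq_zero.mp ((NoZeroSMulDivisors.eq_zero_or_eq_zero_of_smul_eq_zero h7).resolve_left hr)
  rw [← h6]; exact q.2

/-- Quotient by a divisibly closed submodule is torsion-free. -/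
theorem auxQuotNZSD {R : Type*} [CommRing R] {M : Type*} [AddCommGroup M] [Module R M]
    {P : Submodule R M}
    (h : ∀ {r : R}, r ≠ 0 → ∀ {x : M}, r • x ∈ P → x ∈ P) :
    NoZeroSMulDivisors R (M ⧸ P) := by
  refine ⟨fun {r y} hry => ?_⟩
  by_cases hr : r = 0
  · exact Or.inl hr
  right
  obtain ⟨x, rfl⟩ := Submodule.mkQ_surjective P y
  rw [Submodule.mkQ_apply, ← Submodule.Quotient.mk_smul, Submodule.Quotient.mk_eq_zero] at hry
  rw [Submodule.mkQ_apply, Submodule.Quotient.mk_eq_zero]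
  exact h hr hry

/-- Intersection of ranges of rTensor of two submodule inclusions. -/
theorem auxInterRTensor {R M : Type*} [CommRing R] [AddCommGroup M] [Module R M]
    {X : Type*} [AddCommGroup X] [Module R X] [Module.Flat R X] (A B : Submodule R M) :
    LinearMap.range (rTensor X A.subtype) ⊓ LinearMap.range (rTensor X B.subtype)
      = LinearMap.range (rTensor X (A ⊓ B).subtype) := by
  rw [← rTensor_mkQ, ← rTensor_mkQ, ← rTensor_mkQ]
  have hAB_A : A ⊓ B ≤ (LinearMap.ker A.mkQ) := by rw [Submodule.ker_mkQ]; exact inf_le_left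
  have hAB_B : A ⊓ B ≤ (LinearMap.ker B.mkQ) := by rw [Submodule.ker_mkQ]; exact inf_le_right
  set f1 : (M ⧸ (A ⊓ B)) →ₗ[R] (M ⧸ A) := Submodule.liftQ (A ⊓ B) A.mkQ hAB_A with hf1d
  set f2 : (M ⧸ (A ⊓ B)) →ₗ[R] (M ⧸ B) := Submodule.liftQ (A ⊓ B) B.mkQ hAB_B with hf2d
  have hf1 : f1 ∘ₗ (A ⊓ B).mkQ = A.mkQ := Submodule.liftQ_mkQ _ _ _
  have hf2 : f2 ∘ₗ (A ⊓ B).mkQ = B.mkQ := Submodule.liftQ_mkQ _ _ _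
  set g : (M ⧸ (A ⊓ B)) →ₗ[R] (M ⧸ A) × (M ⧸ B) := f1.prod f2 with hg
  have hginj : Function.Injective g := by
    rw [← LinearMap.ker_eq_bot]
    rw [Submodule.eq_bot_iff]
    intro z hz
    obtain ⟨x, rfl⟩ := Submodule.mkQ_surjective (A ⊓ B) z
    rw [LinearMap.mem_ker, LinearMap.prod_apply, Prod.mk_eq_zero] at hz
    obtain ⟨hz1, hz2⟩ := hz
    have hz1' : f1 ((A ⊓ B).mkQ x) = 0 := hz1
    have hz2' : f2 ((A ⊓ B).mkQ x) = 0 := hz2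
    rw [← LinearMap.comp_apply, hf1] at hz1'
    rw [← LinearMap.comp_apply, hf2] at hz2'
    rw [Submodule.mkQ_apply, Submodule.Quotient.mk_eq_zero]
    exact ⟨(Submodule.Quotient.mk_eq_zero _).mp hz1', (Submodule.Quotient.mk_eq_zero _).mp hz2'⟩
  have key : ∀ w : (M ⧸ (A ⊓ B)) ⊗[R] X,
      (TensorProduct.prodLeft R R (M ⧸ A) (M ⧸ B) X) (rTensor X g w)
        = (rTensor X f1 w, rTensor X f2 w) := by
    intro w
    induction w using TensorProduct.induction_on with
    | zero => simp; rfl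
    | tmul m x => simp [g]
    | add w1 w2 ih1 ih2 => simp only [map_add, ih1, ih2, Prod.mk_add_mk]
  ext x
  simp only [Submodule.mem_inf, LinearMap.mem_ker]
  constructor
  · rintro ⟨h1, h2⟩
    have e1 : rTensor X f1 (rTensor X (A ⊓ B).mkQ x) = 0 := by
      rw [← LinearMap.rTensor_comp_apply, hf1, h1]
    have e2 : rTensor X f2 (rTensor X (A ⊓ B).mkQ x) = 0 := by
      rw [← LinearMap.rTensor_comp_apply, hf2, h2]
    have e3 : rTensor X g (rTensor X (A ⊓ B).mkQ x) = 0 := by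
      apply (TensorProduct.prodLeft R R (M ⧸ A) (M ⧸ B) X).injective
      rw [key, e1, e2, map_zero]
      rfl
    exact Module.Flat.rTensor_preserves_injective_linearMap g hginj (by rw [e3, map_zero])
  · intro h
    constructor
    · rw [← hf1, LinearMap.rTensor_comp, LinearMap.comp_apply, h, map_zero]
    · rw [← hf2, LinearMap.rTensor_comp, LinearMap.comp_apply, h, map_zero]

/-- Intersection of ranges of lTensor of two submodule inclusions. -/
theorem auxInterLTensor {R M : Type*} [CommRing R] [AddCommGroup M] [Module R M]
    {X : Type*} [AddCommGroup X] [Module R X] [Module.Flat R X] (A B : Submodule R M) :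
    LinearMap.range (lTensor X A.subtype) ⊓ LinearMap.range (lTensor X B.subtype)
      = LinearMap.range (lTensor X (A ⊓ B).subtype) := by
  rw [← lTensor_mkQ, ← lTensor_mkQ, ← lTensor_mkQ]
  have hAB_A : A ⊓ B ≤ (LinearMap.ker A.mkQ) := by rw [Submodule.ker_mkQ]; exact inf_le_left
  have hAB_B : A ⊓ B ≤ (LinearMap.ker B.mkQ) := by rw [Submodule.ker_mkQ]; exact inf_le_right
  set f1 : (M ⧸ (A ⊓ B)) →ₗ[R] (M ⧸ A) := Submodule.liftQ (A ⊓ B) A.mkQ hAB_A with hf1d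
  set f2 : (M ⧸ (A ⊓ B)) →ₗ[R] (M ⧸ B) := Submodule.liftQ (A ⊓ B) B.mkQ hAB_B with hf2d
  have hf1 : f1 ∘ₗ (A ⊓ B).mkQ = A.mkQ := Submodule.liftQ_mkQ _ _ _
  have hf2 : f2 ∘ₗ (A ⊓ B).mkQ = B.mkQ := Submodule.liftQ_mkQ _ _ _
  set g : (M ⧸ (A ⊓ B)) →ₗ[R] (M ⧸ A) × (M ⧸ B) := f1.prod f2 with hg
  have hginj : Function.Injective g := by
    rw [← LinearMap.ker_eq_bot]
    rw [Submodule.eq_bot_iff]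
    intro z hz
    obtain ⟨x, rfl⟩ := Submodule.mkQ_surjective (A ⊓ B) z
    rw [LinearMap.mem_ker, LinearMap.prod_apply, Prod.mk_eq_zero] at hz
    obtain ⟨hz1, hz2⟩ := hz
    have hz1' : f1 ((A ⊓ B).mkQ x) = 0 := hz1
    have hz2' : f2 ((A ⊓ B).mkQ x) = 0 := hz2
    rw [← LinearMap.comp_apply, hf1] at hz1'
    rw [← LinearMap.comp_apply, hf2] at hz2'
    rw [Submodule.mkQ_apply, Submodule.Quotient.mk_eq_zero]
    exact ⟨(Submodule.Quotient.mk_eq_zero _).mp hz1', (Submodule.Quotient.mk_eq_zero _).mp hz2'⟩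
  have key : ∀ w : X ⊗[R] (M ⧸ (A ⊓ B)),
      (TensorProduct.prodRight R R X (M ⧸ A) (M ⧸ B)) (lTensor X g w)
        = (lTensor X f1 w, lTensor X f2 w) := by
    intro w
    induction w using TensorProduct.induction_on with
    | zero => simp; rfl
    | tmul x m => simp [g]
    | add w1 w2 ih1 ih2 => simp only [map_add, ih1, ih2, Prod.mk_add_mk]
  ext x
  simp only [Submodule.mem_inf, LinearMap.mem_ker]
  constructor
  · rintro ⟨h1, h2⟩
    have e1 : lTensor X f1 (lTensor X (A ⊓ B).mkQ x) = 0 := by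
      rw [← LinearMap.lTensor_comp_apply, hf1, h1]
    have e2 : lTensor X f2 (lTensor X (A ⊓ B).mkQ x) = 0 := by
      rw [← LinearMap.lTensor_comp_apply, hf2, h2]
    have e3 : lTensor X g (lTensor X (A ⊓ B).mkQ x) = 0 := by
      apply (TensorProduct.prodRight R R X (M ⧸ A) (M ⧸ B)).injective
      rw [key, e1, e2, map_zero]
      rfl
    exact Module.Flat.lTensor_preserves_injective_linearMap g hginj (by rw [e3, map_zero])
  · intro h
    constructor
    · rw [← hf1, LinearMap.lTensor_comp, LinearMap.comp_apply, h, map_zero]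
    · rw [← hf2, LinearMap.lTensor_comp, LinearMap.comp_apply, h, map_zero]

/-- Range of the tensor of two inclusions as intersection. -/
theorem auxRangeMap {R M : Type*} [CommRing R] [AddCommGroup M] [Module R M]
    (P Q : Submodule R M) [Module.Flat R (M ⧸ Q)] :
    LinearMap.range (TensorProduct.map P.subtype Q.subtype)
      = LinearMap.range (rTensor M P.subtype) ⊓ LinearMap.range (lTensor M Q.subtype) := by
  apply le_antisymm
  · apply le_inf
    · rw [← LinearMap.rTensor_comp_lTensor]
      rintro _ ⟨z, rfl⟩
      exact ⟨lTensor P Q.subtype z, rfl⟩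
    · rw [← LinearMap.lTensor_comp_rTensor]
      rintro _ ⟨z, rfl⟩
      exact ⟨rTensor Q P.subtype z, rfl⟩
  · rintro x ⟨⟨y, rfl⟩, hx2⟩
    rw [← lTensor_mkQ] at hx2
    have hx2' : lTensor M Q.mkQ ((rTensor M P.subtype) y) = 0 := hx2
    have h1 : rTensor (M ⧸ Q) P.subtype ((lTensor P Q.mkQ) y) = 0 := by
      rw [← LinearMap.comp_apply, LinearMap.rTensor_comp_lTensor,
        ← LinearMap.lTensor_comp_rTensor, LinearMap.comp_apply, hx2']
    have h2 : (lTensor P Q.mkQ) y = 0 :=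
      Module.Flat.rTensor_preserves_injective_linearMap P.subtype P.injective_subtype
        (by rw [h1, map_zero])
    have h3 : y ∈ LinearMap.range (lTensor P Q.subtype) := by
      rw [← lTensor_mkQ, LinearMap.mem_ker]; exact h2
    obtain ⟨z, rfl⟩ := h3
    refine ⟨z, ?_⟩
    rw [← LinearMap.comp_apply, LinearMap.rTensor_comp_lTensor]

end AuxPure

/-- Over a PID, for pure submodules `A, B, C, D` of a flat module `M`, the canonical map
`(A ⊓ B) ⊗ (C ⊓ D) → M ⊗ M` is injective with image the intersection of the images of
`A ⊗ C → M ⊗ M` and `B ⊗ D → M ⊗ M`. -/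
theorem tensor_of_intersections {R : Type u} [CommRing R] [IsDomain R] [IsPrincipalIdealRing R]
    {M : Type v} [AddCommGroup M] [Module R M] [Module.Flat R M]
    {A B C D : Submodule R M} (hA : IsPureSubmodule A) (hB : IsPureSubmodule B)
    (hC : IsPureSubmodule C) (hD : IsPureSubmodule D) :
    Function.Injective (TensorProduct.map (A ⊓ B).subtype (C ⊓ D).subtype) ∧
      LinearMap.range (TensorProduct.map (A ⊓ B).subtype (C ⊓ D).subtype) =
        LinearMap.range (TensorProduct.map A.subtype C.subtype) ⊓
          LinearMap.range (TensorProduct.map B.subtype D.subtype) := by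
  haveI hM : NoZeroSMulDivisors R M := auxNZSD
  have hCd : ∀ {r : R}, r ≠ 0 → ∀ {x : M}, r • x ∈ C → x ∈ C :=
    fun {r} hr {x} hx => auxDivClosed hC hr hx
  have hDd : ∀ {r : R}, r ≠ 0 → ∀ {x : M}, r • x ∈ D → x ∈ D :=
    fun {r} hr {x} hx => auxDivClosed hD hr hx
  have hCDd : ∀ {r : R}, r ≠ 0 → ∀ {x : M}, r • x ∈ C ⊓ D → x ∈ C ⊓ D :=
    fun {r} hr {x} hx => ⟨hCd hr hx.1, hDd hr hx.2⟩
  haveI : NoZeroSMulDivisors R (M ⧸ C) := auxQuotNZSD (fun {r} hr {x} hx => hCd hr hx)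
  haveI : NoZeroSMulDivisors R (M ⧸ D) := auxQuotNZSD (fun {r} hr {x} hx => hDd hr hx)
  haveI : NoZeroSMulDivisors R (M ⧸ (C ⊓ D)) := auxQuotNZSD (fun {r} hr {x} hx => hCDd hr hx)
  haveI : Module.Flat R (M ⧸ C) := auxFlatOfTF
  haveI : Module.Flat R (M ⧸ D) := auxFlatOfTF
  haveI : Module.Flat R (M ⧸ (C ⊓ D)) := auxFlatOfTF
  haveI : Module.Flat R ↥(C ⊓ D) := by
    haveI : NoZeroSMulDivisors R ↥(C ⊓ D) :=
      Function.Injective.noZeroSMulDivisors _ Subtype.val_injective rfl (fun _ _ => rfl)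
    exact auxFlatOfTF
  constructor
  · exact Module.Flat.tensorProduct_mapIncl_injective_of_right (A ⊓ B) (C ⊓ D)
  · rw [auxRangeMap A C, auxRangeMap B D, auxRangeMap (A ⊓ B) (C ⊓ D),
      ← auxInterRTensor A B, ← auxInterLTensor C D]
    exact inf_inf_inf_comm _ _ _ _
end

section
/- Let R be a principal ideal domain and i : N → M an injective R-linear map between flat R-modules. Then i is a pure monomorphism (i.e. i ⊗_R id_A is injective for every R-module A) if and only if for every prime element p of R the induced map N/pN → M/pM is injective. -/
open TensorProduct

universe u v w

section AuxPID
open LinearMap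
variable {R : Type*} [CommRing R]



/-- For a flat module over a domain, scalar multiplication by a nonzero element is injective. -/
lemma aux_smul_injective [IsDomain R] {M : Type*} [AddCommGroup M] [Module R M]
    [Module.Flat R M] {p : R} (hp : p ≠ 0) :
    Function.Injective (fun m : M => p • m) := by
  have hf : Function.Injective (LinearMap.lsmul R R p) := by
    intro a b hab
    simpa using mul_left_cancel₀ hp (by simpa [LinearMap.lsmul_apply, smul_eq_mul] using hab)
  have hinj := Module.Flat.lTensor_preserves_injective_linearMap (M := M)
    (LinearMap.lsmul R R p) hf
  intro m m' h
  have e : ∀ x : M, lTensor M (LinearMap.lsmul R R p) (x ⊗ₜ[R] (1 : R)) =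
      (p • x) ⊗ₜ[R] (1 : R) := by
    intro x
    rw [lTensor_tmul, TensorProduct.smul_tmul]
    simp
  have h1 : lTensor M (LinearMap.lsmul R R p) (m ⊗ₜ[R] (1 : R)) =
      lTensor M (LinearMap.lsmul R R p) (m' ⊗ₜ[R] (1 : R)) := by
    rw [e, e]
    exact congrArg (fun x => x ⊗ₜ[R] (1:R)) h
  have h2 := hinj h1
  have := congrArg (TensorProduct.rid R M) h2
  simpa using this

/-- A torsion-free module over a PID is flat. -/
lemma aux_flat_of_torsionfree [IsDomain R] [IsPrincipalIdealRing R]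
    {Q : Type*} [AddCommGroup Q] [Module R Q]
    (h : ∀ (r : R) (x : Q), r • x = 0 → r = 0 ∨ x = 0) : Module.Flat R Q := by
  rw [Module.Flat.iff_rTensor_injective']
  intro I
  obtain ⟨a, ha⟩ : ∃ a : R, I = Ideal.span {a} :=
    ⟨(IsPrincipalIdealRing.principal I).generator,
      (Submodule.IsPrincipal.span_singleton_generator I).symm⟩
  by_cases ha0 : a = 0
  · subst ha0
    have hI : I = ⊥ := by rw [ha, Ideal.span_singleton_eq_bot]
    subst hI
    intro x y _
    have hz : ∀ s : (⊥ : Ideal R) ⊗[R] Q, s = 0 := by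
      intro s
      induction s using TensorProduct.induction_on with
      | zero => rfl
      | tmul m q =>
        have hm : m = 0 := Subsingleton.elim _ _
        rw [hm, zero_tmul]
      | add x y hx hy => rw [hx, hy, add_zero]
    rw [hz x, hz y]
  · -- e₀ : R →ₗ[R] I, r ↦ r • ⟨a, _⟩
    have haI : a ∈ I := by rw [ha]; exact Ideal.subset_span rfl
    set e₀ : R →ₗ[R] I := LinearMap.toSpanSingleton R I ⟨a, haI⟩ with he₀
    have he₀surj : Function.Surjective e₀ := by
      rintro ⟨y, hy⟩
      rw [ha, Ideal.mem_span_singleton] at hy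
      obtain ⟨c, rfl⟩ := hy
      exact ⟨c, by ext; simp [he₀, LinearMap.toSpanSingleton_apply, smul_eq_mul, mul_comm]⟩
    have hcomp : Function.Injective (rTensor Q (I.subtype ∘ₗ e₀)) := by
      have key : ∀ t : R ⊗[R] Q, rTensor Q (I.subtype ∘ₗ e₀) t =
          (TensorProduct.lid R Q).symm (a • (TensorProduct.lid R Q t)) := by
        intro t
        induction t using TensorProduct.induction_on with
        | zero => simp
        | tmul r q =>
          simp [he₀, LinearMap.toSpanSingleton_apply, smul_eq_mul,
            TensorProduct.smul_tmul', TensorProduct.lid_symm_apply, smul_smul, mul_comm]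
        | add x y hx hy => simp [map_add, hx, hy, smul_add]
      intro x y hxy
      rw [key, key] at hxy
      have h2 : a • (TensorProduct.lid R Q x) = a • (TensorProduct.lid R Q y) :=
        (TensorProduct.lid R Q).symm.injective hxy
      have h3 : a • (TensorProduct.lid R Q x - TensorProduct.lid R Q y) = 0 := by
        rw [smul_sub, h2, sub_self]
      rcases h (a) _ h3 with h4 | h4
      · exact absurd h4 ha0
      · exact (TensorProduct.lid R Q).injective (by rw [sub_eq_zero] at h4; exact h4)
    intro x y hxy
    obtain ⟨x', rfl⟩ := rTensor_surjective Q he₀surj x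
    obtain ⟨y', rfl⟩ := rTensor_surjective Q he₀surj y
    rw [← rTensor_comp_apply, ← rTensor_comp_apply] at hxy
    rw [hcomp hxy]


end AuxPID

section AuxPure
open LinearMap

lemma aux_pure' {R : Type*} [CommRing R]
    {N M Q : Type*} [AddCommGroup N] [Module R N] [AddCommGroup M] [Module R M]
    [AddCommGroup Q] [Module R Q] [Module.Flat R Q]
    (i : N →ₗ[R] M) (hi : Function.Injective i) (q : M →ₗ[R] Q)
    (hq : Function.Surjective q) (hexact : Function.Exact i q)
    {A : Type*} [AddCommGroup A] [Module R A]
    {F : Type*} [AddCommGroup F] [Module R F] [Module.Flat R F]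
    (π : F →ₗ[R] A) (hπs : Function.Surjective π) :
    Function.Injective (rTensor A i) := by
  rw [injective_iff_map_eq_zero]
  intro t ht
  have hKexact : Function.Exact (LinearMap.ker π).subtype π := LinearMap.exact_subtype_ker_map π
  -- lift t to N ⊗ F
  obtain ⟨t', ht'⟩ := lTensor_surjective N hπs t
  -- s := rTensor F i t' dies in M ⊗ A
  have hs0 : lTensor M π (rTensor F i t') = 0 := by
    have h0 : lTensor M π (rTensor F i t') = rTensor A i (lTensor N π t') := by
      rw [← LinearMap.comp_apply, ← LinearMap.comp_apply,
        lTensor_comp_rTensor, rTensor_comp_lTensor]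
    rw [h0, ht', ht]
  -- so it comes from M ⊗ K
  obtain ⟨u, hu⟩ := (lTensor_exact M hKexact hπs (rTensor F i t')).mp hs0
  -- image of u in Q ⊗ K is zero
  have hqu : rTensor (LinearMap.ker π) q u = 0 := by
    have hinj : Function.Injective (lTensor Q (LinearMap.ker π).subtype) :=
      Module.Flat.lTensor_preserves_injective_linearMap _ (LinearMap.ker π).injective_subtype
    apply hinj
    rw [map_zero]
    have h1 : lTensor Q (LinearMap.ker π).subtype (rTensor (LinearMap.ker π) q u) =
        rTensor F q (lTensor M (LinearMap.ker π).subtype u) := by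
      rw [← LinearMap.comp_apply, ← LinearMap.comp_apply,
        lTensor_comp_rTensor, rTensor_comp_lTensor]
    rw [h1, hu, ← LinearMap.comp_apply, ← rTensor_comp,
      hexact.linearMap_comp_eq_zero, rTensor_zero, LinearMap.zero_apply]
  -- so u comes from N ⊗ K
  obtain ⟨v, hv⟩ := (rTensor_exact (LinearMap.ker π) hexact hq u).mp hqu
  have hNF : Function.Injective (rTensor F i) :=
    Module.Flat.rTensor_preserves_injective_linearMap i hi
  have hveq : t' = lTensor N (LinearMap.ker π).subtype v := by
    apply hNF
    have h2 : rTensor F i (lTensor N (LinearMap.ker π).subtype v) =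
        lTensor M (LinearMap.ker π).subtype (rTensor (LinearMap.ker π) i v) := by
      rw [← LinearMap.comp_apply, ← LinearMap.comp_apply,
        rTensor_comp_lTensor, lTensor_comp_rTensor]
    rw [h2, hv, hu]
  have hπk : π ∘ₗ (LinearMap.ker π).subtype = 0 := hKexact.linearMap_comp_eq_zero
  rw [← ht', hveq, ← LinearMap.comp_apply, ← lTensor_comp, hπk, lTensor_zero,
    LinearMap.zero_apply]

/-- If the cokernel of an injection is flat, the injection is universally injective. -/
lemma aux_pure {R : Type*} [CommRing R]
    {N M Q : Type*} [AddCommGroup N] [Module R N] [AddCommGroup M] [Module R M]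
    [AddCommGroup Q] [Module R Q] [Module.Flat R Q]
    (i : N →ₗ[R] M) (hi : Function.Injective i) (q : M →ₗ[R] Q)
    (hq : Function.Surjective q) (hexact : Function.Exact i q)
    (A : Type*) [AddCommGroup A] [Module R A] :
    Function.Injective (rTensor A i) :=
  aux_pure' i hi q hq hexact (Finsupp.linearCombination R (id : A → A))
    (Finsupp.linearCombination_surjective R Function.surjective_id)

end AuxPure

open Pointwise in
/-- Over a PID, an injection of flat modules is pure iff it is injective mod `p` for
every prime `p` of `R`. -/
theorem pure_iff_injective_mod_p {R : Type u} [CommRing R] [IsDomain R] [IsPrincipalIdealRing R]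
    {N : Type v} [AddCommGroup N] [Module R N] [Module.Flat R N]
    {M : Type w} [AddCommGroup M] [Module R M] [Module.Flat R M]
    (i : N →ₗ[R] M) (hi : Function.Injective i) :
    (∀ (A : Type (max u v w)) [AddCommGroup A] [Module R A],
        Function.Injective (TensorProduct.map i (LinearMap.id : A →ₗ[R] A))) ↔
      ∀ p : R, Prime p → ∀ x : N, (∃ y : M, i x = p • y) → ∃ z : N, x = p • z := by
  constructor
  · -- purity implies injective mod p
    rintro h p hp x ⟨y, hy⟩
    set I : Ideal R := Ideal.span {p} with hI
    have hinj := h (ULift.{max v w} (R ⧸ I))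
    have hsm : p • (ULift.up (1 : R ⧸ I) : ULift.{max v w} (R ⧸ I)) = 0 := by
      have : p • (1 : R ⧸ I) = 0 := by
        have h1 : (1 : R ⧸ I) = Submodule.Quotient.mk (1 : R) := rfl
        rw [h1, ← Submodule.Quotient.mk_smul, smul_eq_mul, mul_one,
          Submodule.Quotient.mk_eq_zero]
        exact Ideal.subset_span rfl
      apply ULift.ext
      simpa using this
    have h0 : TensorProduct.map i (LinearMap.id)
        (x ⊗ₜ[R] (ULift.up (1 : R ⧸ I) : ULift.{max v w} (R ⧸ I))) = 0 := by
      rw [TensorProduct.map_tmul, LinearMap.id_coe, id_eq, hy, TensorProduct.smul_tmul,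
        hsm, TensorProduct.tmul_zero]
    have hx0 : x ⊗ₜ[R] (ULift.up (1 : R ⧸ I) : ULift.{max v w} (R ⧸ I)) = 0 :=
      hinj (by rw [h0, map_zero])
    have hx1 : x ⊗ₜ[R] (1 : R ⧸ I) = (0 : N ⊗[R] (R ⧸ I)) := by
      have := congrArg (LinearEquiv.lTensor N
        (ULift.moduleEquiv : ULift.{max v w} (R ⧸ I) ≃ₗ[R] (R ⧸ I))) hx0
      simpa [LinearEquiv.lTensor, TensorProduct.congr_tmul] using this
    have hx2 : (Submodule.Quotient.mk x : N ⧸ (I • ⊤ : Submodule R N)) = 0 := by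
      have h1 : (1 : R ⧸ I) = Ideal.Quotient.mk I 1 := rfl
      have := congrArg (TensorProduct.tensorQuotEquivQuotSMul N I) hx1
      rw [h1, TensorProduct.tensorQuotEquivQuotSMul_tmul_mk, map_zero, one_smul] at this
      exact this
    have hx3 : x ∈ (I • ⊤ : Submodule R N) := by
      rwa [Submodule.Quotient.mk_eq_zero] at hx2
    rw [hI, Submodule.ideal_span_singleton_smul] at hx3
    have hx4 : x ∈ p • ((⊤ : Submodule R N) : Set N) := by
      rw [← Submodule.coe_pointwise_smul]; exact hx3
    obtain ⟨z, -, hz⟩ := Set.mem_smul_set.mp hx4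
    exact ⟨z, hz.symm⟩
  · -- injective mod p implies purity
    intro h A _ _
    have hdiv : ∀ r : R, ∀ x : N, ∀ y : M, i x = r • y → ∃ z, x = r • z := by
      intro r
      induction r using UniqueFactorizationMonoid.induction_on_prime with
      | h₁ =>
        intro x y hxy
        refine ⟨0, ?_⟩
        have : x = 0 := hi (by rw [hxy, zero_smul, map_zero])
        rw [this, zero_smul]
      | h₂ u hu =>
        intro x y hxy
        obtain ⟨u, rfl⟩ := hu
        refine ⟨(↑u⁻¹ : R) • x, ?_⟩
        rw [smul_smul, Units.mul_inv, one_smul]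
      | h₃ a p ha hp ih =>
        intro x y hxy
        obtain ⟨w, hw⟩ := h p hp x ⟨a • y, by rw [hxy, mul_smul]⟩
        have hiw : i w = a • y := by
          have h1 : p • (i w - a • y) = p • (0 : M) := by
            rw [smul_zero, smul_sub, ← map_smul, ← hw, hxy, mul_smul, sub_self]
          have := aux_smul_injective (M := M) hp.ne_zero h1
          rwa [sub_eq_zero] at this
        obtain ⟨z, hz⟩ := ih w y hiw
        exact ⟨z, by rw [hw, hz, smul_smul]⟩
    have hQ : ∀ (r : R) (x : M ⧸ LinearMap.range i), r • x = 0 → r = 0 ∨ x = 0 := by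
      intro r x hr
      by_cases hr0 : r = 0
      · exact Or.inl hr0
      refine Or.inr ?_
      obtain ⟨y, rfl⟩ := Submodule.mkQ_surjective _ x
      have hmem : r • y ∈ LinearMap.range i := by
        rw [← Submodule.Quotient.mk_eq_zero]
        rw [Submodule.Quotient.mk_smul]
        exact hr
      obtain ⟨x0, hx0⟩ := hmem
      obtain ⟨z, rfl⟩ := hdiv r x0 y hx0
      have hy : y = i z := by
        have h1 : r • (y - i z) = r • (0 : M) := by
          rw [smul_zero, smul_sub, ← map_smul, ← hx0, sub_self]
        have := aux_smul_injective (M := M) hr0 h1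
        rwa [sub_eq_zero] at this
      rw [Submodule.mkQ_apply, Submodule.Quotient.mk_eq_zero, hy]
      exact ⟨z, rfl⟩
    haveI : Module.Flat R (M ⧸ LinearMap.range i) := aux_flat_of_torsionfree hQ
    exact aux_pure i hi (LinearMap.range i).mkQ (Submodule.mkQ_surjective _)
      (LinearMap.exact_map_mkQ_range i) A
end

section
/- Let R be a principal ideal domain and D a coalgebra over R whose underlying R-module is free of rank 1. Then D contains exactly one group-like element g, and g generates D as an R-module (g is an R-basis of D). -/
open TensorProduct

universe u v w

/-- A coalgebra over a PID which is free of rank 1 contains exactly one group-like element,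
and this element is an `R`-basis. -/
theorem rank_one_coalgebra_groupLike {R : Type u} [CommRing R] [IsDomain R] [IsPrincipalIdealRing R]
    {D : Type v} [AddCommGroup D] [Module R D] [Coalgebra R D]
    (hcc : IsCocomm R D) (b : Module.Basis (Fin 1) R D) :
    ∃ g : D, IsGroupLike R g ∧ (∀ g' : D, IsGroupLike R g' → g' = g) ∧
      Submodule.span R {g} = ⊤ ∧ ∀ r : R, r • g = 0 → r = 0 := by
  classical
  set e : D := b 0 with he
  have hx : ∀ x : D, x = (b.repr x 0) • e := by
    intro x
    conv_lhs => rw [← b.sum_repr x]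
    simp [Fin.sum_univ_one, he]
  set B : Module.Basis (Fin 1 × Fin 1) R (D ⊗[R] D) := b.tensorProduct b with hB
  have hxx : ∀ y : D ⊗[R] D, y = (B.repr y (0,0)) • (e ⊗ₜ[R] e) := by
    intro y
    conv_lhs => rw [← B.sum_repr y]
    have : (Finset.univ : Finset (Fin 1 × Fin 1)) = {(0,0)} := by decide
    simp [this, hB, Module.Basis.tensorProduct_apply', he]
  set c : R := B.repr (Coalgebra.comul (R := R) e) (0,0) with hc
  have hcomul : Coalgebra.comul (R := R) e = c • (e ⊗ₜ[R] e) := hxx _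
  set u : R := Coalgebra.counit (R := R) e with hu
  -- counit identity gives c * u = 1
  have hrepr_smul : ∀ (r : R), b.repr (r • e) 0 = r := by
    intro r; simp [he]
  have hcu : c * u = 1 := by
    have h1 := Coalgebra.rTensor_counit_comul (R := R) e
    rw [hcomul, map_smul] at h1
    have h2 : (LinearMap.rTensor D (Coalgebra.counit (R := R))) (e ⊗ₜ[R] e)
        = u ⊗ₜ[R] e := by simp [LinearMap.rTensor_tmul, hu]
    rw [h2] at h1
    have h3 := congrArg (TensorProduct.lid R D) h1
    simp only [map_smul, TensorProduct.lid_tmul, one_smul] at h3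
    have h4 : (c * u) • e = e := by rw [mul_smul]; exact h3
    have := congrArg (fun x => b.repr x 0) h4
    simpa [hrepr_smul, he] using this
  have hc0 : c ≠ 0 := fun h => by simp [h] at hcu
  have hu0 : u ≠ 0 := fun h => by simp [h] at hcu
  refine ⟨c • e, ⟨?_, ?_⟩, ?_, ?_, ?_⟩
  · rw [map_smul, hcomul, TensorProduct.smul_tmul', TensorProduct.tmul_smul]
  · rw [map_smul, ← hu, smul_eq_mul, hcu]
  · -- uniqueness
    intro g' hg'
    have hg'e : g' = (b.repr g' 0) • e := hx g'
    set r : R := b.repr g' 0 with hr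
    have hcount : Coalgebra.counit (R := R) g' = 1 := hg'.2
    rw [hg'e, map_smul, ← hu, smul_eq_mul] at hcount
    -- r * u = 1 = c * u, so r = c
    have : r * u = c * u := by rw [hcount, hcu]
    have hrc : r = c := mul_right_cancel₀ hu0 this
    rw [hg'e, hrc]
  · -- span
    rw [eq_top_iff]
    intro x _
    have : x = ((b.repr x 0) * u) • (c • e) := by
      rw [smul_smul, mul_assoc, mul_comm u c, hcu, mul_one]; exact hx x
    rw [this]
    exact Submodule.smul_mem _ _ (Submodule.mem_span_singleton_self _)
  · intro r hr
    rw [smul_smul] at hr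
    have := congrArg (fun x => b.repr x 0) hr
    simp only [hrepr_smul, map_zero, Finsupp.coe_zero, Pi.zero_apply] at this
    rcases mul_eq_zero.mp this with h | h
    · exact h
    · exact absurd h hc0
end

section
/- Let R be a principal ideal domain and C a flat coalgebra over R. Then the group-like elements of C are R-linearly independent: every finite family of pairwise distinct group-like elements of C is linearly independent over R. -/
open TensorProduct

universe u v w

section Aux

variable {R : Type u} [CommRing R] {C : Type v} [AddCommGroup C] [Module R C]

/-- A flat module over a domain is torsion-free. -/
lemma flat_smul_eq_zero [IsDomain R] [Module.Flat R C] {r : R} (hr : r ≠ 0) {x : C}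
    (hx : r • x = 0) : x = 0 := by
  have hinj : Function.Injective (LinearMap.lsmul R R r) := by
    intro a b hab
    exact mul_left_cancel₀ hr (by simpa [LinearMap.lsmul_apply] using hab)
  have h2 := Module.Flat.rTensor_preserves_injective_linearMap (M := C)
    (LinearMap.lsmul R R r) hinj
  have h3 : (LinearMap.lsmul R R r).rTensor C ((1 : R) ⊗ₜ[R] x) = 0 := by
    rw [LinearMap.rTensor_tmul]
    have h1 : (LinearMap.lsmul R R r) (1 : R) = r := by simp
    rw [h1, show (r : R) ⊗ₜ[R] x = (1 : R) ⊗ₜ[R] (r • x) by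
      rw [TensorProduct.tmul_smul, TensorProduct.smul_tmul', smul_eq_mul, mul_one],
      hx, TensorProduct.tmul_zero]
  have h4 : (1 : R) ⊗ₜ[R] x = 0 := h2 (by rw [h3, map_zero])
  have := congrArg (TensorProduct.lid R C) h4
  simpa using this

/-- If `v` is linearly independent and `C` is flat, then `∑ i in s, v i ⊗ x i = 0`
forces all `x i = 0`. -/
lemma key_tensor [Module.Flat R C] {ι : Type*} {v : ι → C} (hv : LinearIndependent R v)
    (s : Finset ι) (x : ι → C) (h : ∑ i ∈ s, v i ⊗ₜ[R] x i = 0) :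
    ∀ i ∈ s, x i = 0 := by
  classical
  set F := (Finsupp.linearCombination R v).rTensor C with hFdef
  have hF : Function.Injective F :=
    Module.Flat.rTensor_preserves_injective_linearMap _ hv
  set e := TensorProduct.finsuppScalarLeft R C ι with hedef
  have hsingle : ∀ (i : ι) (c : C), F (e.symm (Finsupp.single i c)) = v i ⊗ₜ[R] c := by
    intro i c
    rw [hedef, TensorProduct.finsuppScalarLeft_symm_apply_single, hFdef,
      LinearMap.rTensor_tmul, Finsupp.linearCombination_single, one_smul]
  have hsum : F (e.symm (∑ i ∈ s, Finsupp.single i (x i))) = 0 := by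
    rw [map_sum, map_sum, Finset.sum_congr rfl fun i _ => hsingle i (x i)]
    exact h
  have h0 : ∑ i ∈ s, Finsupp.single i (x i) = (0 : ι →₀ C) := by
    apply e.symm.injective
    apply hF
    rw [hsum, map_zero, map_zero]
  intro i hi
  have := congrArg (fun f : ι →₀ C => f i) h0
  simp only [Finsupp.finset_sum_apply, Finsupp.coe_zero, Pi.zero_apply] at this
  rwa [Finset.sum_eq_single i (fun j _ hji => Finsupp.single_eq_of_ne' hji)
    (fun hni => absurd hi hni), Finsupp.single_eq_same] at this

end Aux

/-- The group-like elements of a flat coalgebra over a PID are linearly independent. -/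
theorem groupLike_linearIndependent {R : Type u} [CommRing R] [IsDomain R] [IsPrincipalIdealRing R]
    {C : Type v} [AddCommGroup C] [Module R C] [Coalgebra R C] [Module.Flat R C]
    (hcc : IsCocomm R C) :
    LinearIndependent R ((↑) : {g : C // IsGroupLike R g} → C) := by
  classical
  rw [linearIndependent_iff']
  suffices H : ∀ n : ℕ, ∀ s : Finset {g : C // IsGroupLike R g},
      s.card ≤ n → ∀ f : {g : C // IsGroupLike R g} → R,
      (∑ k ∈ s, f k • (k : C)) = 0 → ∀ i ∈ s, f i = 0 by
    intro s f hsum i hi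
    exact H s.card s le_rfl f hsum i hi
  intro n
  induction n with
  | zero =>
    intro s hcard f _ i hi
    rw [Nat.le_zero, Finset.card_eq_zero] at hcard
    simp [hcard] at hi
  | succ n ih =>
    intro s hcard f hsum i hi
    have hcard' : (s.erase i).card ≤ n := by
      rw [Finset.card_erase_of_mem hi]
      omega
    -- the subfamily indexed by s.erase i is linearly independent, by induction
    have hind : LinearIndependent R
        (fun k : ↥(s.erase i) => ((k : {g : C // IsGroupLike R g}) : C)) := by
      rw [Fintype.linearIndependent_iff]
      intro g hg k
      let g' : {g : C // IsGroupLike R g} → R :=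
        fun m => if h : m ∈ s.erase i then g ⟨m, h⟩ else 0
      have hcoe : ∀ m : ↥(s.erase i), g' (↑m) = g m := fun m => dif_pos m.2
      have hg'sum : ∑ m ∈ s.erase i, g' m • (m : C) = 0 := by
        rw [← Finset.sum_coe_sort (s.erase i)
          (fun m => g' m • ((m : {g : C // IsGroupLike R g}) : C))]
        calc ∑ m : ↥(s.erase i), g' ↑m • ((↑m : {g : C // IsGroupLike R g}) : C)
            = ∑ m : ↥(s.erase i), g m • ((↑m : {g : C // IsGroupLike R g}) : C) :=
              Finset.sum_congr rfl fun m _ => by rw [hcoe m]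
          _ = 0 := hg
      have h0 := ih (s.erase i) hcard' g' hg'sum k k.2
      rw [show g' (↑k) = g k from hcoe k] at h0
      exact h0
    -- apply comul to the relation
    have hΔ : ∑ k ∈ s, f k • ((k : C) ⊗ₜ[R] (k : C)) = 0 := by
      have h1 := congrArg (Coalgebra.comul (R := R) (A := C)) hsum
      rw [map_sum, map_zero] at h1
      rw [← h1]
      exact Finset.sum_congr rfl fun k _ => by rw [map_smul, k.2.1]
    -- tensor the relation with (i : C)
    have hT : ∑ k ∈ s, f k • ((k : C) ⊗ₜ[R] (i : C)) = 0 := by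
      have h1 : (∑ k ∈ s, f k • (k : C)) ⊗ₜ[R] (i : C) = 0 := by
        rw [hsum, TensorProduct.zero_tmul]
      rw [TensorProduct.sum_tmul] at h1
      rw [← h1]
      exact Finset.sum_congr rfl fun k _ => by rw [TensorProduct.smul_tmul']
    -- subtract
    set x : {g : C // IsGroupLike R g} → C := fun k => f k • ((k : C) - (i : C)) with hxdef
    have hsub : ∑ k ∈ s, (k : C) ⊗ₜ[R] x k = 0 := by
      have h1 : ∑ k ∈ s, (k : C) ⊗ₜ[R] x k
          = ∑ k ∈ s, (f k • ((k : C) ⊗ₜ[R] (k : C)) - f k • ((k : C) ⊗ₜ[R] (i : C))) := by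
        refine Finset.sum_congr rfl fun k _ => ?_
        rw [hxdef]
        simp only [smul_sub, TensorProduct.tmul_sub, TensorProduct.tmul_smul]
      rw [h1, Finset.sum_sub_distrib, hΔ, hT, sub_zero]
    have hsub' : ∑ k ∈ s.erase i, (k : C) ⊗ₜ[R] x k = 0 := by
      rw [Finset.sum_erase s (by rw [hxdef]; simp), hsub]
    -- apply the key tensor lemma
    have hx0 : ∀ k ∈ s.erase i, x k = 0 := by
      have h' : ∑ k ∈ Finset.univ,
          ((k : ↥(s.erase i)) : C) ⊗ₜ[R] x ((k : ↥(s.erase i)) : {g : C // IsGroupLike R g})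
          = 0 := by
        rw [Finset.sum_coe_sort (s.erase i)
          (fun k => ((k : {g : C // IsGroupLike R g}) : C) ⊗ₜ[R] x k)]
        exact hsub'
      intro k hk
      exact key_tensor hind Finset.univ (fun m : ↥(s.erase i) => x ↑m) h' ⟨k, hk⟩
        (Finset.mem_univ _)
    -- hence f k = 0 for k ∈ s.erase i
    have hf0 : ∀ k ∈ s.erase i, f k = 0 := by
      intro k hk
      by_contra hfk
      have h1 := flat_smul_eq_zero hfk (hx0 k hk)
      rw [sub_eq_zero] at h1
      exact Finset.ne_of_mem_erase hk (Subtype.ext h1)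
    -- f i • v i = 0, apply counit
    have hsum' : f i • (i : C) = 0 := by
      have h1 := Finset.add_sum_erase s (fun k => f k • (k : C)) hi
      beta_reduce at h1
      rw [hsum, Finset.sum_congr rfl (fun k hk => by rw [hf0 k hk, zero_smul]),
        Finset.sum_const_zero, add_zero] at h1
      exact h1
    have h2 := congrArg (Coalgebra.counit (R := R) (A := C)) hsum'
    rw [map_smul, map_zero, (i.2 : IsGroupLike R (i : C)).2, smul_eq_mul, mul_one] at h2
    exact h2
end

section
/- Let R be a principal ideal domain, C a flat coalgebra over R, and D a subcoalgebra of C (not necessarily pure). Then the purification of D, i.e. the intersection of all pure submodules of C containing D, is again a subcoalgebra of C. -/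
open TensorProduct

universe u v w

set_option maxHeartbeats 1000000

section AuxPurification
open LinearMap Pointwise


/-- A flat module over a domain is torsion-free. -/
lemma auxFlatTorsionFree {R : Type u} [CommRing R] [IsDomain R] {M : Type*} [AddCommGroup M]
    [Module R M] [Module.Flat R M] {r : R} (hr : r ≠ 0) {x : M} (hx : r • x = 0) : x = 0 := by
  have hinj : Function.Injective (LinearMap.lsmul R R r) := fun a b hab => by
    simpa using mul_left_cancel₀ hr (by simpa using hab)
  have h2 : Function.Injective (LinearMap.lTensor M (LinearMap.lsmul R R r)) :=
    Module.Flat.lTensor_preserves_injective_linearMap _ hinj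
  have h3 : (LinearMap.lTensor M (LinearMap.lsmul R R r)) (x ⊗ₜ 1) = 0 := by
    rw [LinearMap.lTensor_tmul, lsmul_apply, smul_eq_mul, mul_one]
    have : x ⊗ₜ[R] r = (r • x) ⊗ₜ[R] (1 : R) := by
      rw [smul_tmul, smul_eq_mul, mul_one]
    rw [this, hx, zero_tmul]
  have h4 : x ⊗ₜ[R] (1 : R) = 0 := h2 (by simpa using h3)
  have := congrArg (TensorProduct.rid R M) h4
  simpa using this

/-- A torsion-free module over a PID is flat. -/
lemma auxFlatOfTorsionFree {R : Type u} [CommRing R] [IsDomain R] [IsPrincipalIdealRing R]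
    {M : Type*} [AddCommGroup M] [Module R M]
    (htf : ∀ (r : R) (x : M), r • x = 0 → r = 0 ∨ x = 0) : Module.Flat R M := by
  rw [Module.Flat.iff_rTensor_injective']
  intro I
  obtain ⟨a, rfl⟩ := (IsPrincipalIdealRing.principal I).principal
  by_cases ha : a = 0
  · subst ha
    have hz : ∀ t : ↥(Ideal.span {(0:R)}) ⊗[R] M, t = 0 := by
      intro t
      induction t using TensorProduct.induction_on with
      | zero => rfl
      | tmul x y =>
        obtain ⟨r, hr⟩ := Ideal.mem_span_singleton'.mp x.2
        have hx : x = 0 := Subtype.ext (by rw [← hr, mul_zero]; rfl)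
        rw [hx, zero_tmul]
      | add s t hs ht => rw [hs, ht, add_zero]
    intro s t _
    rw [hz s, hz t]
  · set I := Ideal.span ({a} : Set R)
    have hmem : a ∈ I := Ideal.subset_span rfl
    set f : R →ₗ[R] ↥I := LinearMap.toSpanSingleton R ↥I ⟨a, hmem⟩ with hf
    have hfs : Function.Surjective f := by
      rintro ⟨y, hy⟩
      obtain ⟨r, hr⟩ := Ideal.mem_span_singleton'.mp hy
      exact ⟨r, Subtype.ext (by simpa [hf, LinearMap.toSpanSingleton_apply] using hr)⟩
    have hcomp : (Submodule.subtype I) ∘ₗ f = LinearMap.toSpanSingleton R R a := by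
      ext; rfl
    have hg : Function.Injective (rTensor M (LinearMap.toSpanSingleton R R a)) := by
      have key : (TensorProduct.lid R M).toLinearMap ∘ₗ rTensor M (LinearMap.toSpanSingleton R R a)
          = (a • (LinearMap.id : M →ₗ[R] M)) ∘ₗ (TensorProduct.lid R M).toLinearMap := by
        apply TensorProduct.ext'
        intro r x
        simp [LinearMap.rTensor_tmul, LinearMap.toSpanSingleton_apply, smul_smul, mul_comm]
      have hsmul : Function.Injective (a • (LinearMap.id : M →ₗ[R] M)) := by
        intro x y hxy
        simp only [LinearMap.smul_apply, LinearMap.id_apply] at hxy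
        have : a • (x - y) = 0 := by rw [smul_sub, hxy, sub_self]
        rcases htf a (x - y) this with h | h
        · exact absurd h ha
        · exact sub_eq_zero.mp h
      intro s t hst
      have h1 : ((TensorProduct.lid R M).toLinearMap ∘ₗ
          rTensor M (LinearMap.toSpanSingleton R R a)) s
          = ((TensorProduct.lid R M).toLinearMap ∘ₗ
          rTensor M (LinearMap.toSpanSingleton R R a)) t := by
        simp only [LinearMap.comp_apply, hst]
      rw [key] at h1
      simp only [LinearMap.comp_apply] at h1
      exact (TensorProduct.lid R M).injective (hsmul h1)
    intro s t hst
    obtain ⟨s', rfl⟩ := LinearMap.rTensor_surjective M hfs s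
    obtain ⟨t', rfl⟩ := LinearMap.rTensor_surjective M hfs t
    have hst2 : rTensor M ((Submodule.subtype I) ∘ₗ f) s' = rTensor M ((Submodule.subtype I) ∘ₗ f) t' := by
      rw [LinearMap.rTensor_comp]; simpa using hst
    rw [hcomp] at hst2
    exact congrArg _ (hg hst2)


lemma auxPureOfFlatQuotientAux {R : Type u} [CommRing R] {C : Type v} [AddCommGroup C]
    [Module R C] (N : Submodule R C) [Module.Flat R (C ⧸ N)]
    (A : Type w) [AddCommGroup A] [Module R A]
    (F : Type w') [AddCommGroup F] [Module R F] [Module.Flat R F]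
    (p : F →ₗ[R] A) (hps : Function.Surjective p) :
    Function.Injective (rTensor A N.subtype) := by
  rw [injective_iff_map_eq_zero]
  intro t ht
  set K := LinearMap.ker p
  have hexact : Function.Exact K.subtype p := LinearMap.exact_subtype_ker_map p
  -- lift t to N ⊗ F
  obtain ⟨y, hy⟩ := LinearMap.lTensor_surjective ↥N hps t
  set z : C ⊗[R] F := rTensor F N.subtype y with hz
  -- z dies in C ⊗ A
  have hz0 : lTensor C p z = 0 := by
    have : lTensor C p (rTensor F N.subtype y) = rTensor A N.subtype (lTensor ↥N p y) := by
      rw [← LinearMap.comp_apply, ← LinearMap.comp_apply,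
        LinearMap.lTensor_comp_rTensor, LinearMap.rTensor_comp_lTensor]
    rw [hz, this, hy, ht]
  -- hence z comes from C ⊗ K
  have hT : Function.Exact (lTensor C K.subtype) (lTensor C p) := lTensor_exact C hexact hps
  have hker : LinearMap.ker (lTensor C p) = LinearMap.range (lTensor C K.subtype) :=
    hT.linearMap_ker_eq
  obtain ⟨w, hw⟩ : z ∈ LinearMap.range (lTensor C K.subtype) := by
    rw [← hker]; exact hz0
  -- push w to (C⧸N) ⊗ K : it is zero by flatness of C⧸N
  have hw0 : rTensor K N.mkQ w = 0 := by
    have hinj : Function.Injective (lTensor (C ⧸ N) K.subtype) :=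
      Module.Flat.lTensor_preserves_injective_linearMap _ (Submodule.injective_subtype K)
    apply hinj
    have h1 : lTensor (C ⧸ N) K.subtype (rTensor K N.mkQ w)
        = rTensor F N.mkQ (lTensor C K.subtype w) := by
      rw [← LinearMap.comp_apply, ← LinearMap.comp_apply,
        LinearMap.lTensor_comp_rTensor, LinearMap.rTensor_comp_lTensor]
    have h3 : N.mkQ ∘ₗ N.subtype = 0 := by
      ext x; simp
    rw [h1, hw, map_zero, hz, ← LinearMap.comp_apply, ← LinearMap.rTensor_comp, h3,
      LinearMap.rTensor_zero, LinearMap.zero_apply]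
  -- hence w comes from N ⊗ K
  have hkerw : LinearMap.ker (rTensor K N.mkQ) = LinearMap.range (rTensor K N.subtype) :=
    rTensor_mkQ K N
  obtain ⟨v, hv⟩ : w ∈ LinearMap.range (rTensor K N.subtype) := by
    rw [← hkerw]; exact hw0
  -- conclude : y = lTensor N K.subtype v since F is flat
  have hFinj : Function.Injective (rTensor F N.subtype) :=
    Module.Flat.rTensor_preserves_injective_linearMap _ (Submodule.injective_subtype N)
  have hyv : y = lTensor ↥N K.subtype v := by
    apply hFinj
    rw [← hz]
    have : rTensor F N.subtype (lTensor ↥N K.subtype v)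
        = lTensor C K.subtype (rTensor K N.subtype v) := by
      rw [← LinearMap.comp_apply, ← LinearMap.comp_apply,
        LinearMap.rTensor_comp_lTensor, LinearMap.lTensor_comp_rTensor]
    rw [this, hv, hw]
  -- finish
  have hpk : p ∘ₗ K.subtype = 0 := by
    ext x; exact x.2
  rw [← hy, hyv, ← LinearMap.comp_apply, ← LinearMap.lTensor_comp, hpk,
    LinearMap.lTensor_zero, LinearMap.zero_apply]

/-- If the quotient `C ⧸ N` is flat, then `N` is a pure submodule. -/
lemma auxPureOfFlatQuotient {R : Type u} [CommRing R] {C : Type v} [AddCommGroup C] [Module R C]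
    (N : Submodule R C) [Module.Flat R (C ⧸ N)]
    (A : Type w) [AddCommGroup A] [Module R A] :
    Function.Injective (rTensor A N.subtype) :=
  auxPureOfFlatQuotientAux N A (A →₀ R) (Finsupp.linearCombination R (_root_.id : A → A))
    (Finsupp.linearCombination_surjective R Function.surjective_id)


lemma auxMapZeroRight {R : Type u} [CommRing R] {M N P Q : Type*} [AddCommGroup M]
    [AddCommGroup N] [AddCommGroup P] [AddCommGroup Q] [Module R M] [Module R N] [Module R P]
    [Module R Q] (f : M →ₗ[R] P) : TensorProduct.map f (0 : N →ₗ[R] Q) = 0 := by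
  apply TensorProduct.ext'
  intro m n
  simp

/-- Transfer injectivity of a tensored inclusion along a linear equivalence of coefficients. -/
lemma auxPureLower {R : Type u} [CommRing R] {C : Type v} [AddCommGroup C] [Module R C]
    (N : Submodule R C) {A : Type w} [AddCommGroup A] [Module R A]
    {B : Type w'} [AddCommGroup B] [Module R B] (e : A ≃ₗ[R] B)
    (hNB : Function.Injective (TensorProduct.map N.subtype (LinearMap.id : B →ₗ[R] B))) :
    Function.Injective (TensorProduct.map N.subtype (LinearMap.id : A →ₗ[R] A)) := by
  have key : TensorProduct.map N.subtype (LinearMap.id : A →ₗ[R] A) =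
      (LinearEquiv.lTensor C e.symm).toLinearMap ∘ₗ
      (TensorProduct.map N.subtype (LinearMap.id : B →ₗ[R] B)) ∘ₗ
      (LinearEquiv.lTensor ↥N e).toLinearMap := by
    apply TensorProduct.ext'
    intro n a
    simp [LinearEquiv.lTensor]
  rw [key]
  simp only [LinearMap.coe_comp, LinearEquiv.coe_coe]
  exact (LinearEquiv.lTensor C e.symm).injective.comp
    (hNB.comp (LinearEquiv.lTensor ↥N e).injective)

/-- Pure submodules of a flat module over a domain are saturated. -/
lemma auxPureSaturated {R : Type u} [CommRing R] [IsDomain R] {C : Type v} [AddCommGroup C]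
    [Module R C] [Module.Flat R C] {P : Submodule R C}
    (hP : ∀ (A : Type (max u v)) [AddCommGroup A] [Module R A],
      Function.Injective (TensorProduct.map P.subtype (LinearMap.id : A →ₗ[R] A)))
    {r : R} (hr : r ≠ 0) {x : C} (hx : r • x ∈ P) : x ∈ P := by
  set I : Ideal R := Ideal.span {r} with hI
  have hinj : Function.Injective
      (TensorProduct.map P.subtype (LinearMap.id : (R ⧸ I) →ₗ[R] (R ⧸ I))) :=
    auxPureLower P (ULift.moduleEquiv : ULift.{v} (R ⧸ I) ≃ₗ[R] (R ⧸ I)).symm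
      (hP (ULift.{v} (R ⧸ I)))
  set pp : ↥P := ⟨r • x, hx⟩ with hpp
  have h0 : pp ⊗ₜ[R] (Submodule.Quotient.mk (1:R) : R ⧸ I) = 0 := by
    apply hinj
    rw [map_zero, TensorProduct.map_tmul, LinearMap.id_coe, id_eq]
    show (r • x) ⊗ₜ[R] (Submodule.Quotient.mk (1:R) : R ⧸ I) = 0
    rw [smul_tmul, ← Submodule.Quotient.mk_smul, smul_eq_mul, mul_one]
    have hmk : (Submodule.Quotient.mk r : R ⧸ I) = 0 :=
      (Submodule.Quotient.mk_eq_zero _).mpr (Ideal.subset_span rfl)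
    rw [hmk, tmul_zero]
  have h1 := congrArg (tensorQuotEquivQuotSMul ↥P I) h0
  rw [map_zero, Ideal.Quotient.mk_eq_mk, tensorQuotEquivQuotSMul_tmul_mk, one_smul] at h1
  have h2 : pp ∈ I • (⊤ : Submodule R ↥P) := (Submodule.Quotient.mk_eq_zero _).mp h1
  rw [hI, Submodule.ideal_span_singleton_smul] at h2
  have h3 : (pp : ↥P) ∈ r • ((⊤ : Submodule R ↥P) : Set ↥P) := by
    rw [← Submodule.coe_pointwise_smul]; exact h2
  obtain ⟨p', -, hp'⟩ := h3
  have h4 : r • ((p' : C) - x) = 0 := by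
    have : r • (p' : C) = r • x := by
      have := congrArg (Subtype.val) hp'
      simpa [hpp] using this
    rw [smul_sub, this, sub_self]
  have h5 : (p' : C) = x := sub_eq_zero.mp (auxFlatTorsionFree hr h4)
  rw [← h5]
  exact p'.2

lemma auxMapZeroLeft {R : Type u} [CommRing R] {M N P Q : Type*} [AddCommGroup M]
    [AddCommGroup N] [AddCommGroup P] [AddCommGroup Q] [Module R M] [Module R N] [Module R P]
    [Module R Q] (g : N →ₗ[R] Q) : TensorProduct.map (0 : M →ₗ[R] P) g = 0 := by
  apply TensorProduct.ext'
  intro m n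
  simp


section Test
variable {R : Type u} [CommRing R] [IsDomain R] {C : Type v} [AddCommGroup C] [Module R C]

/-- The saturation of a submodule. -/
def auxSat (D : Submodule R C) : Submodule R C where
  carrier := {x | ∃ r : R, r ≠ 0 ∧ r • x ∈ D}
  zero_mem' := ⟨1, one_ne_zero, by simp⟩
  add_mem' := by
    rintro a b ⟨r, hr, hra⟩ ⟨s, hs, hsb⟩
    refine ⟨r * s, mul_ne_zero hr hs, ?_⟩
    rw [smul_add]
    exact Submodule.add_mem _ (by rw [mul_comm, mul_smul]; exact D.smul_mem s hra)
      (by rw [mul_smul]; exact D.smul_mem r hsb)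
  smul_mem' := by
    rintro c x ⟨r, hr, hrx⟩
    exact ⟨r, hr, by rw [smul_comm]; exact D.smul_mem c hrx⟩

lemma auxSat_mem {D : Submodule R C} {x : C} :
    x ∈ auxSat D ↔ ∃ r : R, r ≠ 0 ∧ r • x ∈ D := Iff.rfl

end Test

end AuxPurification

open LinearMap Pointwise in
/-- The purification of a subcoalgebra of a flat coalgebra over a PID, i.e. the intersection
of all pure submodules containing it, is a subcoalgebra. -/
theorem purification_isSubcoalg {R : Type u} [CommRing R] [IsDomain R] [IsPrincipalIdealRing R]
    {C : Type v} [AddCommGroup C] [Module R C] [Coalgebra R C] [Module.Flat R C]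
    (hcc : IsCocomm R C) (D : Submodule R C) (hD : IsSubcoalg D) :
    IsSubcoalg (sInf {P : Submodule R C | IsPureSubmodule P ∧ D ≤ P}) := by
  classical
  set D' : Submodule R C := auxSat D with hD'def
  have hDD' : D ≤ D' := fun x hx => ⟨1, one_ne_zero, by simpa using hx⟩
  -- the quotient C ⧸ D' is torsion-free, hence flat
  have hqtf : ∀ (r : R) (y : C ⧸ D'), r • y = 0 → r = 0 ∨ y = 0 := by
    intro r y hry
    by_cases hr : r = 0
    · exact Or.inl hr
    right
    obtain ⟨x, rfl⟩ := Submodule.mkQ_surjective D' y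
    rw [← map_smul, Submodule.mkQ_apply, Submodule.Quotient.mk_eq_zero] at hry
    obtain ⟨s, hs, hsD⟩ := hry
    rw [Submodule.mkQ_apply, Submodule.Quotient.mk_eq_zero]
    exact ⟨s * r, mul_ne_zero hs hr, by rwa [mul_smul]⟩
  haveI hflatQ : Module.Flat R (C ⧸ D') := auxFlatOfTorsionFree hqtf
  -- D' is pure
  have hpureD' : IsPureSubmodule D' := fun A _ _ => auxPureOfFlatQuotient D' A
  -- the purification of D equals D'
  have hsinf : sInf {P : Submodule R C | IsPureSubmodule P ∧ D ≤ P} = D' := by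
    apply le_antisymm
    · exact sInf_le ⟨hpureD', hDD'⟩
    · apply le_sInf
      rintro P ⟨hPpure, hDP⟩
      rintro x ⟨r, hr, hrx⟩
      exact auxPureSaturated hPpure hr (hDP hrx)
  rw [hsinf]
  -- now prove that D' is a subcoalgebra
  intro x hx
  obtain ⟨r, hr, hrx⟩ := hx
  set δ := Coalgebra.comul (R := R) x with hδ
  set W := LinearMap.range (TensorProduct.map D'.subtype D'.subtype) with hW
  -- range of (D ⊗ D → C ⊗ C) is contained in W
  have hWD : LinearMap.range (TensorProduct.map D.subtype D.subtype) ≤ W := by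
    rintro _ ⟨t, rfl⟩
    refine ⟨TensorProduct.map (Submodule.inclusion hDD') (Submodule.inclusion hDD') t, ?_⟩
    rw [← LinearMap.comp_apply, ← TensorProduct.map_comp,
      Submodule.subtype_comp_inclusion]
  have hδr : r • δ ∈ W := by
    have h := hD _ hrx
    rw [map_smul] at h
    exact hWD h
  obtain ⟨t0, ht0⟩ := hδr
  have hq0 : D'.mkQ ∘ₗ D'.subtype = 0 := by ext y; simp
  -- Step A : (id ⊗ mkQ) δ = 0
  have hA : lTensor C D'.mkQ δ = 0 := by
    have h1 : r • (lTensor C D'.mkQ δ) = 0 := by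
      rw [← map_smul, ← ht0, ← LinearMap.comp_apply, LinearMap.lTensor_comp_map, hq0,
        auxMapZeroRight, LinearMap.zero_apply]
    exact auxFlatTorsionFree hr h1
  -- Step C : (mkQ ⊗ id) δ = 0
  have hC : rTensor C D'.mkQ δ = 0 := by
    have h1 : r • (rTensor C D'.mkQ δ) = 0 := by
      rw [← map_smul, ← ht0, ← LinearMap.comp_apply, LinearMap.rTensor_comp_map, hq0,
        auxMapZeroLeft, LinearMap.zero_apply]
    exact auxFlatTorsionFree hr h1
  -- Step B : δ comes from C ⊗ D'
  obtain ⟨s, hs⟩ : δ ∈ LinearMap.range (lTensor C D'.subtype) := by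
    rw [← lTensor_mkQ]
    exact hA
  -- Step D : (mkQ ⊗ id) s = 0 in (C ⧸ D') ⊗ D'
  have hDs : rTensor ↥D' D'.mkQ s = 0 := by
    have hinj : Function.Injective (lTensor (C ⧸ D') D'.subtype) :=
      Module.Flat.lTensor_preserves_injective_linearMap _ (Submodule.injective_subtype D')
    apply hinj
    rw [map_zero, ← LinearMap.comp_apply, LinearMap.lTensor_comp_rTensor,
      ← LinearMap.rTensor_comp_lTensor, LinearMap.comp_apply, hs, hC]
  -- Step E : s comes from D' ⊗ D'
  obtain ⟨v, hv⟩ : s ∈ LinearMap.range (rTensor ↥D' D'.subtype) := by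
    rw [← rTensor_mkQ]
    exact hDs
  -- Step F : conclude
  refine ⟨v, ?_⟩
  rw [← hs, ← hv, ← LinearMap.comp_apply, LinearMap.lTensor_comp_rTensor]
end

section
/- Let R be a principal ideal domain, C a flat coalgebra over R, and D a pure irreducible component of C, i.e. a maximal element among the subcoalgebras of C that are pure irreducible. Then D is a pure submodule of C. -/
open TensorProduct

universe u v w

section Aux

open LinearMap

variable {R : Type*} [CommRing R]

/-- Torsion-free module. -/
def IsTF (R M : Type*) [CommRing R] [AddCommGroup M] [Module R M] : Prop :=
  ∀ (r : R) (x : M), r ≠ 0 → r • x = 0 → x = 0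

variable {C : Type*} [AddCommGroup C] [Module R C]

lemma isTF_sub (htf : IsTF R C) (P : Submodule R C) : IsTF R P := by
  intro r x hr hx
  exact Subtype.ext (htf r x.1 hr (by simpa using congrArg Subtype.val hx))

lemma isTF_quot (P : Submodule R C)
    (hsat : ∀ (r : R) (x : C), r ≠ 0 → r • x ∈ P → x ∈ P) : IsTF R (C ⧸ P) := by
  intro r x hr hx
  obtain ⟨c, rfl⟩ := Submodule.mkQ_surjective P x
  rw [Submodule.mkQ_apply, ← Submodule.Quotient.mk_smul, Submodule.Quotient.mk_eq_zero] at hx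
  rw [Submodule.mkQ_apply, Submodule.Quotient.mk_eq_zero]
  exact hsat r c hr hx

lemma isTF_of_flat {R : Type*} [CommRing R] [IsDomain R] {M : Type*} [AddCommGroup M]
    [Module R M] [Module.Flat R M] : IsTF R M := by
  intro r x hr hx
  have hinj : Function.Injective (LinearMap.toSpanSingleton R R r) := by
    intro a b hab
    simp only [LinearMap.toSpanSingleton_apply, smul_eq_mul] at hab
    exact mul_right_cancel₀ hr hab
  have h2 : Function.Injective (LinearMap.rTensor M (LinearMap.toSpanSingleton R R r)) :=
    Module.Flat.rTensor_preserves_injective_linearMap _ hinj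
  have key : LinearMap.rTensor M (LinearMap.toSpanSingleton R R r)
      ((TensorProduct.lid R M).symm x) = (TensorProduct.lid R M).symm (r • x) := by
    rw [TensorProduct.lid_symm_apply, TensorProduct.lid_symm_apply, LinearMap.rTensor_tmul,
      LinearMap.toSpanSingleton_apply, one_smul, ← TensorProduct.smul_tmul, smul_eq_mul, mul_one]
  have h3 : LinearMap.rTensor M (LinearMap.toSpanSingleton R R r)
      ((TensorProduct.lid R M).symm x) = 0 := by rw [key, hx, map_zero]
  have h4 : (TensorProduct.lid R M).symm x = 0 := h2 (by rw [h3, map_zero])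
  exact (LinearEquiv.map_eq_zero_iff _).mp h4

lemma flat_of_isTF {R : Type*} [CommRing R] [IsDomain R] [IsPrincipalIdealRing R]
    {M : Type*} [AddCommGroup M] [Module R M] (htf : IsTF R M) : Module.Flat R M := by
  rw [Module.Flat.iff_rTensor_injective']
  intro I
  obtain ⟨r, hI⟩ := (IsPrincipalIdealRing.principal I).principal
  by_cases hr : r = 0
  · subst hr
    have hIbot : I = ⊥ := by rw [hI]; exact Submodule.span_zero_singleton R
    subst hIbot
    intro a b h
    have hall : ∀ t : (↥(⊥ : Ideal R)) ⊗[R] M, t = 0 := by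
      intro t
      induction t using TensorProduct.induction_on with
      | zero => rfl
      | tmul x m =>
          have hx : x = 0 := Subtype.ext ((Submodule.mem_bot R).mp x.2)
          rw [hx, TensorProduct.zero_tmul]
      | add a b ha hb => rw [ha, hb, add_zero]
    rw [hall a, hall b]
  · subst hI
    set e := LinearEquiv.toSpanNonzeroSingleton R R r hr with he
    have key : ∀ t : R ⊗[R] M, LinearMap.rTensor M (Submodule.span R {r}).subtype
        (LinearMap.rTensor M e.toLinearMap t)
        = LinearMap.rTensor M (LinearMap.toSpanSingleton R R r) t := by
      intro t
      rw [← LinearMap.rTensor_comp_apply]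
      have hco : (Submodule.span R {r}).subtype ∘ₗ (e : R →ₗ[R] Submodule.span R {r}) =
          LinearMap.toSpanSingleton R R r := by
        ext
        show ((e 1 : Submodule.span R {r}) : R) = (1 : R) • r
        rw [he, LinearEquiv.toSpanNonzeroSingleton_one, one_smul]
      rw [hco]
    have lidc : ∀ t, (TensorProduct.lid R M) (LinearMap.rTensor M
        (LinearMap.toSpanSingleton R R r) t) = r • (TensorProduct.lid R M t) := by
      intro t
      induction t using TensorProduct.induction_on with
      | zero => simp
      | tmul a m =>
          rw [LinearMap.rTensor_tmul, LinearMap.toSpanSingleton_apply]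
          simp [TensorProduct.lid_tmul, smul_smul, mul_comm]
      | add a b ha hb => simp only [map_add, smul_add, ha, hb]
    have hts : Function.Injective (LinearMap.rTensor M (LinearMap.toSpanSingleton R R r)) := by
      intro a b hab
      have h1 := congrArg (TensorProduct.lid R M) hab
      rw [lidc, lidc] at h1
      have hsub : r • ((TensorProduct.lid R M) a - (TensorProduct.lid R M) b) = 0 := by
        rw [smul_sub, h1, sub_self]
      have h2 := sub_eq_zero.mp (htf r _ hr hsub)
      exact (TensorProduct.lid R M).injective h2
    intro a b hab
    obtain ⟨a', rfl⟩ := LinearMap.rTensor_surjective M (g := e.toLinearMap) e.surjective a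
    obtain ⟨b', rfl⟩ := LinearMap.rTensor_surjective M (g := e.toLinearMap) e.surjective b
    exact congrArg _ (hts (by rw [← key, ← key, hab]))

end Aux

section Chase

open LinearMap

variable {R : Type*} [CommRing R]

lemma map_map {M M' M'' N N' N'' : Type*}
    [AddCommGroup M] [Module R M] [AddCommGroup M'] [Module R M']
    [AddCommGroup M''] [Module R M''] [AddCommGroup N] [Module R N]
    [AddCommGroup N'] [Module R N'] [AddCommGroup N''] [Module R N'']
    (f₂ : M' →ₗ[R] M'') (g₂ : N' →ₗ[R] N'') (f₁ : M →ₗ[R] M') (g₁ : N →ₗ[R] N')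
    (t : M ⊗[R] N) :
    TensorProduct.map f₂ g₂ (TensorProduct.map f₁ g₁ t)
      = TensorProduct.map (f₂ ∘ₗ f₁) (g₂ ∘ₗ g₁) t := by
  rw [← LinearMap.comp_apply, ← TensorProduct.map_comp]

lemma chase_aux {M N : Type*} [AddCommGroup M] [Module R M]
    [AddCommGroup N] [Module R N] (j : N →ₗ[R] M) (hj : Function.Injective j)
    (hQ : Module.Flat R (M ⧸ LinearMap.range j))
    {A : Type*} [AddCommGroup A] [Module R A]
    (F : Type*) [AddCommGroup F] [Module R F] [Module.Flat R F]
    (q : F →ₗ[R] A) (hqsurj : Function.Surjective q) :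
    ∀ x, rTensor A j x = 0 → x = 0 := by
  haveI := hQ
  set p := (LinearMap.range j).mkQ with hp
  have hexact : Function.Exact j p := LinearMap.exact_map_mkQ_range j
  have hpsurj : Function.Surjective p := Submodule.mkQ_surjective _
  set k := (LinearMap.ker q).subtype with hk
  have hkq : Function.Exact k q := LinearMap.exact_subtype_ker_map q
  intro x hx
  obtain ⟨x', rfl⟩ := LinearMap.lTensor_surjective N hqsurj x
  have h1 : lTensor M q (rTensor F j x') = 0 := by
    rw [← comp_apply, lTensor_comp_rTensor, ← rTensor_comp_lTensor, comp_apply]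
    exact hx
  have hEx1 : Function.Exact (lTensor M k) (lTensor M q) := lTensor_exact M hkq hqsurj
  obtain ⟨y, hy⟩ := (hEx1 (rTensor F j x')).mp h1
  have hpj : p ∘ₗ j = 0 := by
    ext n
    simp [hp]
  have h2 : lTensor (M ⧸ LinearMap.range j) k (rTensor (LinearMap.ker q) p y) = 0 := by
    rw [← comp_apply, lTensor_comp_rTensor, ← rTensor_comp_lTensor, comp_apply, hy,
      ← rTensor_comp_apply, hpj, rTensor_zero, LinearMap.zero_apply]
  have h3 : rTensor (LinearMap.ker q) p y = 0 := by
    have hinj := Module.Flat.lTensor_preserves_injective_linearMap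
      (M := M ⧸ LinearMap.range j) k (Submodule.injective_subtype _)
    exact hinj (by rw [h2, map_zero])
  have hEx2 : Function.Exact (rTensor (LinearMap.ker q) j) (rTensor (LinearMap.ker q) p) :=
    rTensor_exact (LinearMap.ker q) hexact hpsurj
  obtain ⟨z, hz⟩ := (hEx2 y).mp h3
  have h4 : rTensor F j (lTensor N k z) = rTensor F j x' := by
    rw [← comp_apply, rTensor_comp_lTensor, ← lTensor_comp_rTensor, comp_apply, hz, hy]
  have h5 : lTensor N k z = x' :=
    Module.Flat.rTensor_preserves_injective_linearMap (M := F) j hj h4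
  have hqk : q ∘ₗ k = 0 := by
    ext w
    exact LinearMap.mem_ker.mp w.2
  rw [← h5, ← lTensor_comp_apply, hqk, lTensor_zero, LinearMap.zero_apply]

lemma inj_tensor_of_flat_quot {M N : Type*} [AddCommGroup M] [Module R M]
    [AddCommGroup N] [Module R N] (j : N →ₗ[R] M) (hj : Function.Injective j)
    (hQ : Module.Flat R (M ⧸ LinearMap.range j))
    (A : Type*) [AddCommGroup A] [Module R A] :
    Function.Injective (TensorProduct.map j (LinearMap.id : A →ₗ[R] A)) := by
  have hrT : TensorProduct.map j (LinearMap.id : A →ₗ[R] A) = rTensor A j := rfl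
  rw [hrT]
  have key := chase_aux j hj hQ (A →₀ R) (Finsupp.linearCombination R (id : A → A))
    (Finsupp.linearCombination_id_surjective R A)
  intro a b hab
  exact sub_eq_zero.mp (key (a - b) (by rw [map_sub, hab, sub_self]))


end Chase

section Sat

variable {R : Type*} [CommRing R] [IsDomain R] {C : Type*} [AddCommGroup C] [Module R C]

/-- The saturation of a submodule. -/
def satur (N : Submodule R C) : Submodule R C where
  carrier := {x | ∃ r : R, r ≠ 0 ∧ r • x ∈ N}
  add_mem' := by
    rintro a b ⟨r, hr, hra⟩ ⟨s, hs, hsb⟩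
    refine ⟨r * s, mul_ne_zero hr hs, ?_⟩
    rw [smul_add]
    refine N.add_mem ?_ ?_
    · rw [mul_comm, mul_smul]
      exact N.smul_mem s hra
    · rw [mul_smul]
      exact N.smul_mem r hsb
  zero_mem' := ⟨1, one_ne_zero, by simp⟩
  smul_mem' := by
    rintro c x ⟨r, hr, hrx⟩
    refine ⟨r, hr, ?_⟩
    rw [smul_comm]
    exact N.smul_mem c hrx

lemma le_satur (N : Submodule R C) : N ≤ satur N :=
  fun x hx => ⟨1, one_ne_zero, by simpa⟩

lemma satur_sat (N : Submodule R C) :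
    ∀ (r : R) (x : C), r ≠ 0 → r • x ∈ satur N → x ∈ satur N := by
  rintro r x hr ⟨s, hs, hsrx⟩
  refine ⟨s * r, mul_ne_zero hs hr, ?_⟩
  rw [mul_smul]
  exact hsrx

end Sat

section Pure

variable {R : Type u} [CommRing R] [IsDomain R] [IsPrincipalIdealRing R]
  {C : Type v} [AddCommGroup C] [Module R C]

lemma isPureSubmodule_of_sat (D : Submodule R C)
    (hsat : ∀ (r : R) (x : C), r ≠ 0 → r • x ∈ D → x ∈ D) : IsPureSubmodule D := by
  intro A _ _
  refine inj_tensor_of_flat_quot D.subtype (Submodule.injective_subtype D) ?_ A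
  refine flat_of_isTF (isTF_quot _ ?_)
  intro r x hr hx
  rw [Submodule.range_subtype] at hx ⊢
  exact hsat r x hr hx

lemma isPureIn_of_sat {N D : Submodule R C} (hND : N ≤ D)
    (hsat : ∀ (r : R) (x : C), r ≠ 0 → x ∈ D → r • x ∈ N → x ∈ N) : IsPureIn N D := by
  refine ⟨hND, fun A _ _ => ?_⟩
  refine inj_tensor_of_flat_quot (Submodule.inclusion hND)
    (Submodule.inclusion_injective hND) ?_ A
  refine flat_of_isTF (isTF_quot _ ?_)
  intro r x hr hx
  rw [Submodule.range_inclusion] at hx ⊢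
  rw [Submodule.mem_comap] at hx ⊢
  have hcoe : D.subtype (r • x) = r • (x : C) := by simp
  rw [hcoe] at hx
  exact hsat r x.1 hr x.2 hx

end Pure

section Coalg

open LinearMap

variable {R : Type*} [CommRing R] [IsDomain R] [IsPrincipalIdealRing R]
  {C : Type*} [AddCommGroup C] [Module R C] [Coalgebra R C] [Module.Flat R C]

lemma satur_isSubcoalg {U : Submodule R C} (hU : IsSubcoalg U) :
    IsSubcoalg (satur U) := by
  set P := satur U with hPdef
  have htfQ : IsTF R (C ⧸ P) := isTF_quot P (satur_sat U)
  haveI hflatQ : Module.Flat R (C ⧸ P) := flat_of_isTF htfQ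
  have hUP : U ≤ P := le_satur U
  have hmk0 : P.mkQ ∘ₗ U.subtype = 0 := by
    ext u
    simpa [Submodule.Quotient.mk_eq_zero] using hUP u.2
  have hz1 : ∀ t ∈ LinearMap.range (TensorProduct.map U.subtype U.subtype),
      LinearMap.rTensor C P.mkQ t = 0 := by
    rintro t ⟨u, rfl⟩
    rw [show (LinearMap.rTensor C P.mkQ) = TensorProduct.map P.mkQ LinearMap.id from rfl,
      _root_.map_map, LinearMap.id_comp, hmk0, TensorProduct.map_zero_left, LinearMap.zero_apply]
  have hz2 : ∀ t ∈ LinearMap.range (TensorProduct.map U.subtype U.subtype),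
      LinearMap.lTensor C P.mkQ t = 0 := by
    rintro t ⟨u, rfl⟩
    rw [show (LinearMap.lTensor C P.mkQ) = TensorProduct.map LinearMap.id P.mkQ from rfl,
      _root_.map_map, LinearMap.id_comp, hmk0, TensorProduct.map_zero_right, LinearMap.zero_apply]
  rintro x ⟨r, hr, hrx⟩
  have hsm1 : r • LinearMap.rTensor C P.mkQ (Coalgebra.comul (R := R) x) = 0 := by
    rw [← map_smul, ← map_smul]
    exact hz1 _ (hU _ hrx)
  have hsm2 : r • LinearMap.lTensor C P.mkQ (Coalgebra.comul (R := R) x) = 0 := by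
    rw [← map_smul, ← map_smul]
    exact hz2 _ (hU _ hrx)
  have hsmulinj : Function.Injective (DistribMulAction.toLinearMap R (C ⧸ P) r) := by
    intro a b hab
    refine sub_eq_zero.mp (htfQ r (a - b) hr ?_)
    have hab' : r • a = r • b := hab
    rw [smul_sub, hab', sub_self]
  have h1 : LinearMap.rTensor C P.mkQ (Coalgebra.comul (R := R) x) = 0 := by
    have hinj : Function.Injective
        (LinearMap.rTensor C (DistribMulAction.toLinearMap R (C ⧸ P) r)) :=
      Module.Flat.rTensor_preserves_injective_linearMap _ hsmulinj
    apply hinj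
    rw [map_zero]; erw [LinearMap.rTensor_smul_action]
    exact hsm1
  have h2 : LinearMap.lTensor C P.mkQ (Coalgebra.comul (R := R) x) = 0 := by
    have hinj : Function.Injective
        (LinearMap.lTensor C (DistribMulAction.toLinearMap R (C ⧸ P) r)) :=
      Module.Flat.lTensor_preserves_injective_linearMap _ hsmulinj
    apply hinj
    rw [map_zero]; erw [LinearMap.lTensor_smul_action]
    exact hsm2
  have hm1 : Coalgebra.comul (R := R) x ∈ LinearMap.ker (LinearMap.rTensor C P.mkQ) :=
    LinearMap.mem_ker.mpr h1
  rw [rTensor_mkQ] at hm1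
  obtain ⟨s, hs⟩ := hm1
  have h3 : LinearMap.rTensor (C ⧸ P) P.subtype (LinearMap.lTensor P P.mkQ s) = 0 := by
    rw [← LinearMap.comp_apply, rTensor_comp_lTensor, ← lTensor_comp_rTensor,
      LinearMap.comp_apply, hs]
    exact h2
  have h4 : LinearMap.lTensor P P.mkQ s = 0 :=
    Module.Flat.rTensor_preserves_injective_linearMap (M := C ⧸ P) P.subtype
      (Submodule.injective_subtype P) (by rw [h3, map_zero])
  have hm2 : s ∈ LinearMap.ker (LinearMap.lTensor P P.mkQ) := LinearMap.mem_ker.mpr h4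
  rw [lTensor_mkQ] at hm2
  obtain ⟨w, hw⟩ := hm2
  refine ⟨w, ?_⟩
  have hcal : TensorProduct.map P.subtype P.subtype w
      = LinearMap.rTensor C P.subtype (LinearMap.lTensor P P.subtype w) := by
    rw [← LinearMap.comp_apply, rTensor_comp_lTensor]
  rw [hcal, hw, hs]

lemma isSubcoalg_inf {P D : Submodule R C} (htfC : IsTF R C)
    (hP : IsSubcoalg P) (hD : IsSubcoalg D)
    (hPsat : ∀ (r : R) (x : C), r ≠ 0 → r • x ∈ P → x ∈ P) :
    IsSubcoalg (P ⊓ D) := by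
  haveI hfQP : Module.Flat R (C ⧸ P) := flat_of_isTF (isTF_quot P hPsat)
  haveI hfD : Module.Flat R D := flat_of_isTF (isTF_sub htfC D)
  set W' : Submodule R D := (P ⊓ D).comap D.subtype with hW'def
  haveI hfW' : Module.Flat R W' := flat_of_isTF (isTF_sub (isTF_sub htfC D) W')
  have hle : W' ≤ P.comap D.subtype := fun w hw => hw.1
  set k : (D ⧸ W') →ₗ[R] C ⧸ P := Submodule.mapQ W' P D.subtype hle with hkdef
  have hkcomp : k ∘ₗ W'.mkQ = P.mkQ ∘ₗ D.subtype := by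
    ext d
    simp [hkdef, Submodule.mapQ_apply]
  have hkinj : Function.Injective k := by
    have h0 : ∀ y, k y = 0 → y = 0 := by
      intro y hy
      obtain ⟨d, rfl⟩ := Submodule.mkQ_surjective W' y
      have h1 : P.mkQ (D.subtype d) = 0 := by
        rw [← LinearMap.comp_apply, ← hkcomp, LinearMap.comp_apply]
        exact hy
      rw [Submodule.mkQ_apply, Submodule.Quotient.mk_eq_zero] at h1
      rw [Submodule.mkQ_apply, Submodule.Quotient.mk_eq_zero]
      exact ⟨h1, d.2⟩
    intro a b hab
    exact sub_eq_zero.mp (h0 (a - b) (by rw [map_sub, hab, sub_self]))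
  have hmkP0 : P.mkQ ∘ₗ P.subtype = 0 := by
    ext u
    simpa [Submodule.Quotient.mk_eq_zero] using u.2
  intro x hx
  obtain ⟨s, hs⟩ := hP x hx.1
  obtain ⟨d, hd⟩ := hD x hx.2
  have e1 : LinearMap.rTensor D W'.mkQ d = 0 := by
    have i1 : Function.Injective (LinearMap.rTensor D k) :=
      Module.Flat.rTensor_preserves_injective_linearMap k hkinj
    have i2 : Function.Injective (LinearMap.lTensor (C ⧸ P) D.subtype) :=
      Module.Flat.lTensor_preserves_injective_linearMap _ (Submodule.injective_subtype D)
    apply i1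
    rw [map_zero]
    apply i2
    rw [map_zero, ← LinearMap.rTensor_comp_apply, hkcomp, ← LinearMap.comp_apply,
      lTensor_comp_rTensor]
    have hstep : TensorProduct.map (P.mkQ ∘ₗ D.subtype) D.subtype d
        = LinearMap.rTensor C P.mkQ (TensorProduct.map D.subtype D.subtype d) := by
      rw [show (LinearMap.rTensor C P.mkQ) = TensorProduct.map P.mkQ LinearMap.id from rfl,
        _root_.map_map, LinearMap.id_comp]
    rw [hstep, hd, ← hs,
      show (LinearMap.rTensor C P.mkQ) = TensorProduct.map P.mkQ LinearMap.id from rfl,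
      _root_.map_map, LinearMap.id_comp, hmkP0, TensorProduct.map_zero_left, LinearMap.zero_apply]
  have hm1 : d ∈ LinearMap.ker (LinearMap.rTensor D W'.mkQ) := LinearMap.mem_ker.mpr e1
  rw [rTensor_mkQ] at hm1
  obtain ⟨e, he⟩ := hm1
  have e2 : LinearMap.lTensor W' W'.mkQ e = 0 := by
    have i3 : Function.Injective (LinearMap.lTensor W' k) :=
      Module.Flat.lTensor_preserves_injective_linearMap k hkinj
    have i4 : Function.Injective (LinearMap.rTensor (C ⧸ P) (D.subtype ∘ₗ W'.subtype)) :=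
      Module.Flat.rTensor_preserves_injective_linearMap _
        ((Submodule.injective_subtype D).comp (Submodule.injective_subtype W'))
    apply i3
    rw [map_zero]
    apply i4
    rw [map_zero, ← LinearMap.lTensor_comp_apply, hkcomp, ← LinearMap.comp_apply,
      rTensor_comp_lTensor]
    have hstep : TensorProduct.map (D.subtype ∘ₗ W'.subtype) (P.mkQ ∘ₗ D.subtype) e
        = LinearMap.lTensor C P.mkQ (TensorProduct.map D.subtype D.subtype
          (LinearMap.rTensor D W'.subtype e)) := by
      rw [show (LinearMap.lTensor C P.mkQ) = TensorProduct.map LinearMap.id P.mkQ from rfl,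
        show (LinearMap.rTensor D W'.subtype) = TensorProduct.map W'.subtype LinearMap.id from rfl,
        _root_.map_map, _root_.map_map]
      simp only [LinearMap.id_comp, LinearMap.comp_id]
    rw [hstep, he, hd, ← hs,
      show (LinearMap.lTensor C P.mkQ) = TensorProduct.map LinearMap.id P.mkQ from rfl,
      _root_.map_map, LinearMap.id_comp, hmkP0, TensorProduct.map_zero_right, LinearMap.zero_apply]
  have hm2 : e ∈ LinearMap.ker (LinearMap.lTensor W' W'.mkQ) := LinearMap.mem_ker.mpr e2
  rw [lTensor_mkQ] at hm2
  obtain ⟨f, hf⟩ := hm2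
  set eW := Submodule.comapSubtypeEquivOfLe (inf_le_right : P ⊓ D ≤ D) with heW
  refine ⟨TensorProduct.map eW.toLinearMap eW.toLinearMap f, ?_⟩
  have hcoe : (P ⊓ D).subtype ∘ₗ eW.toLinearMap = D.subtype ∘ₗ W'.subtype := by
    ext w
    rfl
  rw [_root_.map_map, hcoe]
  have hstep : TensorProduct.map (D.subtype ∘ₗ W'.subtype) (D.subtype ∘ₗ W'.subtype) f
      = TensorProduct.map D.subtype D.subtype (LinearMap.rTensor D W'.subtype
        (LinearMap.lTensor W' W'.subtype f)) := by
    rw [show (LinearMap.rTensor D W'.subtype) = TensorProduct.map W'.subtype LinearMap.id from rfl,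
      show (LinearMap.lTensor W' W'.subtype) = TensorProduct.map LinearMap.id W'.subtype from rfl,
      _root_.map_map, _root_.map_map]
    simp only [LinearMap.comp_id, LinearMap.id_comp]
  rw [hstep, hf, he, hd]

end Coalg

/-- A pure irreducible component of a flat coalgebra over a PID is a pure submodule. -/
theorem pureIrredComponent_isPure {R : Type u} [CommRing R] [IsDomain R] [IsPrincipalIdealRing R]
    {C : Type v} [AddCommGroup C] [Module R C] [Coalgebra R C] [Module.Flat R C]
    (hcc : IsCocomm R C) (D : Submodule R C) (hD : IsPureIrredComponent D) :
    IsPureSubmodule D := by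
  obtain ⟨⟨hDsc, hDne, hDirr⟩, hmax⟩ := hD
  have htfC : IsTF R C := isTF_of_flat
  have hDE : D ≤ satur D := le_satur D
  have hEsc : IsSubcoalg (satur D) := satur_isSubcoalg hDsc
  have hEne : satur D ≠ ⊥ := fun h => hDne (le_bot_iff.mp (h ▸ hDE))
  have hEirr : ∀ U V : Submodule R C, IsSubcoalg U → IsSubcoalg V →
      IsPureIn U (satur D) → IsPureIn V (satur D) → U ≠ ⊥ → V ≠ ⊥ → U ⊓ V ≠ ⊥ := by
    intro U V hUsc hVsc hUp hVp hU0 hV0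
    obtain ⟨hUle, -⟩ := hUp
    obtain ⟨hVle, -⟩ := hVp
    have hWUsc : IsSubcoalg (satur U ⊓ D) :=
      isSubcoalg_inf htfC (satur_isSubcoalg hUsc) hDsc (satur_sat U)
    have hWVsc : IsSubcoalg (satur V ⊓ D) :=
      isSubcoalg_inf htfC (satur_isSubcoalg hVsc) hDsc (satur_sat V)
    have hWUp : IsPureIn (satur U ⊓ D) D := by
      refine isPureIn_of_sat inf_le_right ?_
      intro r x hr hxD hrx
      exact ⟨satur_sat U r x hr hrx.1, hxD⟩
    have hWVp : IsPureIn (satur V ⊓ D) D := by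
      refine isPureIn_of_sat inf_le_right ?_
      intro r x hr hxD hrx
      exact ⟨satur_sat V r x hr hrx.1, hxD⟩
    have hWUne : satur U ⊓ D ≠ ⊥ := by
      rw [Submodule.ne_bot_iff] at hU0 ⊢
      obtain ⟨u, huU, hu0⟩ := hU0
      obtain ⟨r, hr, hrD⟩ := hUle huU
      exact ⟨r • u, ⟨le_satur U (U.smul_mem r huU), hrD⟩, fun h => hu0 (htfC r u hr h)⟩
    have hWVne : satur V ⊓ D ≠ ⊥ := by
      rw [Submodule.ne_bot_iff] at hV0 ⊢
      obtain ⟨v, hvV, hv0⟩ := hV0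
      obtain ⟨r, hr, hrD⟩ := hVle hvV
      exact ⟨r • v, ⟨le_satur V (V.smul_mem r hvV), hrD⟩, fun h => hv0 (htfC r v hr h)⟩
    have hint := hDirr _ _ hWUsc hWVsc hWUp hWVp hWUne hWVne
    rw [Submodule.ne_bot_iff] at hint ⊢
    obtain ⟨x, hx, hx0⟩ := hint
    obtain ⟨r, hr, hrU⟩ := hx.1.1
    obtain ⟨s, hs, hsV⟩ := hx.2.1
    refine ⟨(s * r) • x, ⟨?_, ?_⟩, fun h => hx0 (htfC (s * r) x (mul_ne_zero hs hr) h)⟩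
    · rw [mul_smul]
      exact U.smul_mem s hrU
    · rw [mul_comm, mul_smul]
      exact V.smul_mem r hsV
  have hED : satur D = D := hmax (satur D) ⟨hEsc, hEne, hEirr⟩ hDE
  refine isPureSubmodule_of_sat D ?_
  intro r x hr hrx
  have hxE : x ∈ satur D := ⟨r, hr, hrx⟩
  rwa [hED] at hxE
end

section
/- Let R be a principal ideal domain, C a flat coalgebra over R, and {V_n}_{n ≥ 0} an increasing family of pure subcoalgebras of C with ⋃_{n ≥ 0} V_n = C and V_n ⊆ V_{n-1} ∧_C V₀ for all n ≥ 1. Then every pure simple subcoalgebra S of C is contained in V₀. -/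
open TensorProduct

universe u v w

section AuxLemmas1
open TensorProduct LinearMap Pointwise
variable {R : Type*} [CommRing R]

/-- Over a PID, a torsion-free module is flat. -/
theorem flat_of_torsionfree [IsDomain R] [IsPrincipalIdealRing R]
    {M : Type*} [AddCommGroup M] [Module R M]
    (htf : ∀ (r : R) (x : M), r • x = 0 → r = 0 ∨ x = 0) : Module.Flat R M := by
  rw [Module.Flat.iff_rTensor_injective']
  intro I
  obtain ⟨r, rfl⟩ := (IsPrincipalIdealRing.principal I).principal
  by_cases hr : r = 0
  · subst hr
    have hz : ∀ t : (↥(Ideal.span {(0:R)})) ⊗[R] M, t = 0 := by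
      intro t
      induction t using TensorProduct.induction_on with
      | zero => rfl
      | tmul a m =>
        have ha : a = 0 := Subtype.ext (by
          have := a.2
          rw [Ideal.mem_span_singleton] at this
          simpa [zero_dvd_iff] using this)
        rw [ha, zero_tmul]
      | add x y hx hy => rw [hx, hy, add_zero]
    intro s t _
    rw [hz s, hz t]
  · have hrm : r ∈ Ideal.span {r} := Ideal.mem_span_singleton_self r
    have hsurj : ∀ t : (↥(Ideal.span {r})) ⊗[R] M, ∃ m : M,
        t = (⟨r, hrm⟩ : ↥(Ideal.span {r})) ⊗ₜ[R] m := by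
      intro t
      induction t using TensorProduct.induction_on with
      | zero => exact ⟨0, (tmul_zero _ _).symm⟩
      | tmul a m =>
        obtain ⟨c, hc⟩ := Ideal.mem_span_singleton.mp a.2
        refine ⟨c • m, ?_⟩
        have ha : a = c • (⟨r, hrm⟩ : ↥(Ideal.span {r})) := Subtype.ext (by
          simp [hc, mul_comm, smul_eq_mul])
        rw [ha, smul_tmul]
      | add x y hx hy =>
        obtain ⟨m1, rfl⟩ := hx
        obtain ⟨m2, rfl⟩ := hy
        exact ⟨m1 + m2, by rw [tmul_add]⟩
    rw [injective_iff_map_eq_zero]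
    intro t ht
    obtain ⟨m, rfl⟩ := hsurj t
    have : r • m = 0 := by
      have := congrArg (TensorProduct.lid R M) ht
      simpa using this
    rcases htf r m this with h | h
    · exact absurd h hr
    · rw [h, tmul_zero]

/-- A flat module over a domain is torsion-free. -/
theorem tf_of_flat [IsDomain R] {M : Type*} [AddCommGroup M] [Module R M] [Module.Flat R M]
    {r : R} {x : M} (h : r • x = 0) : r = 0 ∨ x = 0 := by
  by_cases hr : r = 0
  · exact Or.inl hr
  right
  have hinj : Function.Injective ((LinearMap.lsmul R R) r) := by
    intro a b hab
    simpa using mul_left_cancel₀ hr (by simpa [smul_eq_mul] using hab)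
  have h2 : Function.Injective (lTensor M ((LinearMap.lsmul R R) r)) :=
    Module.Flat.lTensor_preserves_injective_linearMap _ hinj
  have hx1 : (x ⊗ₜ[R] (1:R)) = (0 : M ⊗[R] R) := by
    apply h2
    have : (x ⊗ₜ[R] r : M ⊗[R] R) = 0 := by
      apply (TensorProduct.rid R M).injective
      simpa using h
    simpa [lsmul_apply, smul_eq_mul] using this
  have := congrArg (TensorProduct.rid R M) hx1
  simpa using this


theorem inj_rTensor_of_flat_quot_aux {M : Type*} [AddCommGroup M] [Module R M]
    (N : Submodule R M) [Module.Flat R (M ⧸ N)]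
    {F A : Type*} [AddCommGroup F] [Module R F] [AddCommGroup A] [Module R A]
    [Module.Flat R F] (p : F →ₗ[R] A) (hpsurj : Function.Surjective p)
    (t : (↥N) ⊗[R] A) (ht : rTensor A N.subtype t = 0) : t = 0 := by
  obtain ⟨t', rfl⟩ := lTensor_surjective (N := F) ↥N hpsurj t
  have hm'0 : lTensor M p (rTensor F N.subtype t') = 0 := by
    rw [← LinearMap.comp_apply, lTensor_comp_rTensor, ← rTensor_comp_lTensor,
      LinearMap.comp_apply, ht]
  obtain ⟨u, hu⟩ :=
    (lTensor_exact M (LinearMap.exact_subtype_ker_map p) hpsurj _).mp hm'0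
  have hπ0 : (N.mkQ ∘ₗ N.subtype) = 0 := by
    ext y; exact (Submodule.Quotient.mk_eq_zero _).mpr y.2
  have hw0 : rTensor (↥(LinearMap.ker p)) N.mkQ u = 0 := by
    have hinjk : Function.Injective (lTensor (M ⧸ N) (LinearMap.ker p).subtype) :=
      Module.Flat.lTensor_preserves_injective_linearMap _ (LinearMap.ker p).injective_subtype
    apply hinjk
    rw [map_zero, ← LinearMap.comp_apply, lTensor_comp_rTensor, ← rTensor_comp_lTensor,
      LinearMap.comp_apply, hu, ← LinearMap.comp_apply, ← rTensor_comp, hπ0,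
      rTensor_zero, LinearMap.zero_apply]
  obtain ⟨v, hv⟩ : u ∈ LinearMap.range (rTensor (↥(LinearMap.ker p)) N.subtype) := by
    rw [← rTensor_mkQ]; exact hw0
  have ht' : t' = lTensor ↥N (LinearMap.ker p).subtype v := by
    have hinjF : Function.Injective (rTensor F N.subtype) :=
      Module.Flat.rTensor_preserves_injective_linearMap _ N.injective_subtype
    apply hinjF
    rw [← hu, ← hv, ← LinearMap.comp_apply, ← LinearMap.comp_apply,
      lTensor_comp_rTensor, rTensor_comp_lTensor]
  rw [ht', ← LinearMap.comp_apply, ← lTensor_comp]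
  have : (p ∘ₗ (LinearMap.ker p).subtype) = 0 := by ext y; exact y.2
  rw [this, lTensor_zero, LinearMap.zero_apply]

/-- If `M ⧸ N` is flat, then `N ⊗ A → M ⊗ A` is injective for every `A`. -/
theorem inj_rTensor_of_flat_quot {M : Type*} [AddCommGroup M] [Module R M]
    (N : Submodule R M) [Module.Flat R (M ⧸ N)] {A : Type*} [AddCommGroup A] [Module R A] :
    Function.Injective (rTensor A N.subtype) := by
  rw [injective_iff_map_eq_zero]
  intro t ht
  exact inj_rTensor_of_flat_quot_aux N (Finsupp.linearCombination R (id : A → A))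
    (Finsupp.linearCombination_surjective R Function.surjective_id) t ht

/-- Pull an element of `Im(A ⊗ N)` killed by `M⧸B` into `Im((A ⊓ B) ⊗ N)`. -/
theorem mem_range_rTensor_inf {M N : Type*} [AddCommGroup M] [Module R M]
    [AddCommGroup N] [Module R N] [Module.Flat R N] (A B : Submodule R M)
    {t : M ⊗[R] N} (h1 : t ∈ LinearMap.range (rTensor N A.subtype))
    (h2 : rTensor N B.mkQ t = 0) : t ∈ LinearMap.range (rTensor N (A ⊓ B).subtype) := by
  obtain ⟨u, rfl⟩ := h1
  set f : ↥A →ₗ[R] M ⧸ B := B.mkQ ∘ₗ A.subtype with hf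
  have hfu : rTensor N f u = 0 := by
    rw [hf, rTensor_comp, LinearMap.comp_apply]; exact h2
  set ι : (↥A ⧸ LinearMap.ker f) →ₗ[R] M ⧸ B := (LinearMap.ker f).liftQ f le_rfl with hι
  have hιinj : Function.Injective ι := by
    rw [← LinearMap.ker_eq_bot, hι, Submodule.ker_liftQ_eq_bot]
    exact le_rfl
  have hu0 : rTensor N (LinearMap.ker f).mkQ u = 0 := by
    apply Module.Flat.rTensor_preserves_injective_linearMap ι hιinj
    rw [map_zero, ← LinearMap.comp_apply, ← rTensor_comp, hι, Submodule.liftQ_mkQ]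
    exact hfu
  obtain ⟨v, hv⟩ : u ∈ LinearMap.range (rTensor N (LinearMap.ker f).subtype) := by
    rw [← rTensor_mkQ]; exact hu0
  have hmem : ∀ w : ↥(LinearMap.ker f), ((w : ↥A) : M) ∈ A ⊓ B := by
    intro w
    exact ⟨(w : ↥A).2, (Submodule.Quotient.mk_eq_zero _).mp w.2⟩
  set e : ↥(LinearMap.ker f) →ₗ[R] ↥(A ⊓ B) :=
    LinearMap.codRestrict (A ⊓ B) (A.subtype ∘ₗ (LinearMap.ker f).subtype) hmem with he
  refine ⟨rTensor N e v, ?_⟩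
  rw [← LinearMap.comp_apply, ← rTensor_comp]
  have : (A ⊓ B).subtype ∘ₗ e = A.subtype ∘ₗ (LinearMap.ker f).subtype := by
    ext w; rfl
  rw [this, rTensor_comp, LinearMap.comp_apply, hv]

/-- Mirror version. -/
theorem mem_range_lTensor_inf {M N : Type*} [AddCommGroup M] [Module R M]
    [AddCommGroup N] [Module R N] [Module.Flat R M] (A B : Submodule R N)
    {t : M ⊗[R] N} (h1 : t ∈ LinearMap.range (lTensor M A.subtype))
    (h2 : lTensor M B.mkQ t = 0) : t ∈ LinearMap.range (lTensor M (A ⊓ B).subtype) := by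
  obtain ⟨u, rfl⟩ := h1
  set f : ↥A →ₗ[R] N ⧸ B := B.mkQ ∘ₗ A.subtype with hf
  have hfu : lTensor M f u = 0 := by
    rw [hf, lTensor_comp, LinearMap.comp_apply]; exact h2
  set ι : (↥A ⧸ LinearMap.ker f) →ₗ[R] N ⧸ B := (LinearMap.ker f).liftQ f le_rfl with hι
  have hιinj : Function.Injective ι := by
    rw [← LinearMap.ker_eq_bot, hι, Submodule.ker_liftQ_eq_bot]
    exact le_rfl
  have hu0 : lTensor M (LinearMap.ker f).mkQ u = 0 := by
    apply Module.Flat.lTensor_preserves_injective_linearMap ι hιinj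
    rw [map_zero, ← LinearMap.comp_apply, ← lTensor_comp, hι, Submodule.liftQ_mkQ]
    exact hfu
  obtain ⟨v, hv⟩ : u ∈ LinearMap.range (lTensor M (LinearMap.ker f).subtype) := by
    rw [← lTensor_mkQ]; exact hu0
  have hmem : ∀ w : ↥(LinearMap.ker f), ((w : ↥A) : N) ∈ A ⊓ B := by
    intro w
    exact ⟨(w : ↥A).2, (Submodule.Quotient.mk_eq_zero _).mp w.2⟩
  set e : ↥(LinearMap.ker f) →ₗ[R] ↥(A ⊓ B) :=
    LinearMap.codRestrict (A ⊓ B) (A.subtype ∘ₗ (LinearMap.ker f).subtype) hmem with he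
  refine ⟨lTensor M e v, ?_⟩
  rw [← LinearMap.comp_apply, ← lTensor_comp]
  have : (A ⊓ B).subtype ∘ₗ e = A.subtype ∘ₗ (LinearMap.ker f).subtype := by
    ext w; rfl
  rw [this, lTensor_comp, LinearMap.comp_apply, hv]

/-- Combine: an element of `Im(A ⊗ N)` killed by `N ⧸ B` lies in `Im(A ⊗ B)`. -/
theorem mem_range_map_of_mem {M N : Type*} [AddCommGroup M] [Module R M]
    [AddCommGroup N] [Module R N] (A : Submodule R M) (B : Submodule R N)
    [Module.Flat R (N ⧸ B)]
    {t : M ⊗[R] N} (h1 : t ∈ LinearMap.range (rTensor N A.subtype))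
    (h2 : lTensor M B.mkQ t = 0) :
    t ∈ LinearMap.range (TensorProduct.map A.subtype B.subtype) := by
  obtain ⟨u, rfl⟩ := h1
  have hu0 : lTensor ↥A B.mkQ u = 0 := by
    apply Module.Flat.rTensor_preserves_injective_linearMap A.subtype A.injective_subtype
    rw [map_zero, ← LinearMap.comp_apply, rTensor_comp_lTensor, ← lTensor_comp_rTensor,
      LinearMap.comp_apply]
    exact h2
  obtain ⟨v, hv⟩ : u ∈ LinearMap.range (lTensor ↥A B.subtype) := by
    rw [← lTensor_mkQ]; exact hu0
  refine ⟨v, ?_⟩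
  rw [← hv, ← LinearMap.comp_apply, rTensor_comp_lTensor]


end AuxLemmas1

section AuxLemmas2
open TensorProduct LinearMap Pointwise

/-- Elementwise purity from tensor purity. -/
theorem mem_of_smul_mem {R : Type u} [CommRing R] [IsDomain R]
    {C : Type v} [AddCommGroup C] [Module R C] [Module.Flat R C]
    {N : Submodule R C} (hN : IsPureSubmodule N) {r : R} (hr : r ≠ 0)
    {x : C} (hx : r • x ∈ N) : x ∈ N := by
  set I : Ideal R := Ideal.span {r} with hI
  have hinj := hN (ULift.{v} (R ⧸ I))
  have h0 : (TensorProduct.map N.subtype (LinearMap.id : ULift.{v} (R ⧸ I) →ₗ[R] _))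
      ((⟨r • x, hx⟩ : N) ⊗ₜ (ULift.up 1)) = 0 := by
    have hone : (r • (ULift.up (1 : R ⧸ I) : ULift.{v} (R ⧸ I))) = 0 := by
      have : (r • (1 : R ⧸ I)) = 0 := by
        rw [show (1 : R ⧸ I) = Submodule.Quotient.mk (1 : R) from rfl,
          ← Submodule.Quotient.mk_smul]
        rw [Submodule.Quotient.mk_eq_zero]
        simpa using (show r ∈ I from Ideal.mem_span_singleton_self r)
      apply ULift.ext
      simpa using this
    rw [map_tmul]
    simp only [Submodule.coe_subtype, LinearMap.id_coe, id_eq]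
    rw [smul_tmul, hone, tmul_zero]
  have ht : ((⟨r • x, hx⟩ : N) ⊗ₜ[R] (ULift.up 1 : ULift.{v} (R ⧸ I))) = 0 := by
    apply hinj
    rw [h0, map_zero]
  have ht2 : ((⟨r • x, hx⟩ : N) ⊗ₜ[R] (1 : R ⧸ I)) = (0 : N ⊗[R] (R ⧸ I)) := by
    have := congrArg (TensorProduct.congr (LinearEquiv.refl R N) ULift.moduleEquiv) ht
    simpa using this
  have ht3 : Submodule.Quotient.mk (p := I • (⊤ : Submodule R N)) (⟨r • x, hx⟩ : N) = 0 := by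
    have := congrArg (TensorProduct.tensorQuotEquivQuotSMul N I) ht2
    rw [map_zero] at this
    rw [← this]
    show _ = (TensorProduct.tensorQuotEquivQuotSMul N I) (_ ⊗ₜ (Ideal.Quotient.mk I 1))
    rw [tensorQuotEquivQuotSMul, LinearEquiv.trans_apply, TensorProduct.comm_tmul,
      quotTensorEquivQuotSMul_mk_tmul, one_smul]
  have hmem : (⟨r • x, hx⟩ : N) ∈ I • (⊤ : Submodule R N) :=
    (Submodule.Quotient.mk_eq_zero _).mp ht3
  rw [hI, Submodule.ideal_span_singleton_smul] at hmem
  have hmem' : (⟨r • x, hx⟩ : N) ∈ r • ((⊤ : Submodule R N) : Set N) := by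
    rw [← SetLike.mem_coe, Submodule.coe_pointwise_smul] at hmem
    exact hmem
  obtain ⟨n, -, hn⟩ := hmem'
  have hc : r • (n : C) = r • x := congrArg Subtype.val hn
  have : r • ((n : C) - x) = 0 := by rw [smul_sub, hc, sub_self]
  rcases tf_of_flat this with h | h
  · exact absurd h hr
  · have : (n : C) = x := by rwa [sub_eq_zero] at h
    rw [← this]; exact n.2

end AuxLemmas2

/-- If a flat coalgebra over a PID has an exhaustive increasing filtration by pure
subcoalgebras with `V (n+1) ≤ V n ∧ V 0`, then every pure simple subcoalgebra is contained
in `V 0`. -/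
theorem pureSimple_le_filtration_zero {R : Type u} [CommRing R] [IsDomain R] [IsPrincipalIdealRing R]
    {C : Type v} [AddCommGroup C] [Module R C] [Coalgebra R C] [Module.Flat R C]
    (hcc : IsCocomm R C) (V : ℕ → Submodule R C) (hmono : Monotone V)
    (hpure : ∀ n, IsPureSubmodule (V n)) (hsub : ∀ n, IsSubcoalg (V n))
    (hexh : (⨆ n, V n) = ⊤) (hwedge : ∀ n : ℕ, V (n + 1) ≤ wedge (V n) (V 0))
    (S : Submodule R C) (hS : IsPureSimple S) :
    S ≤ V 0 := by
  classical
  clear hcc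
  obtain ⟨hSne, hSpure, hSsub, hSsimple⟩ := hS
  -- elementwise purity
  have hElemS : ∀ (r : R) (x : C), r • x ∈ S → r ≠ 0 → x ∈ S :=
    fun r x h hr => mem_of_smul_mem hSpure hr h
  have hElemV : ∀ (n : ℕ) (r : R) (x : C), r • x ∈ V n → r ≠ 0 → x ∈ V n :=
    fun n r x h hr => mem_of_smul_mem (hpure n) hr h
  -- flatness of S
  haveI hFlatS : Module.Flat R ↥S := by
    apply flat_of_torsionfree
    intro r x h
    have h' : r • (x : C) = 0 := by exact_mod_cast congrArg Subtype.val h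
    rcases tf_of_flat h' with h | h
    · exact Or.inl h
    · exact Or.inr (Subtype.ext h)
  -- flatness of quotients
  have hQuotFlat : ∀ (D : Submodule R C),
      (∀ (r : R) (x : C), r • x ∈ D → r ≠ 0 → x ∈ D) → Module.Flat R (C ⧸ D) := by
    intro D hD
    apply flat_of_torsionfree
    intro r y hy
    by_cases hr : r = 0
    · exact Or.inl hr
    right
    obtain ⟨x, rfl⟩ := D.mkQ_surjective y
    show Submodule.Quotient.mk x = 0
    rw [Submodule.Quotient.mk_eq_zero]
    have hy' : Submodule.Quotient.mk (p := D) (r • x) = 0 := by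
      rw [Submodule.Quotient.mk_smul]; exact hy
    rw [Submodule.Quotient.mk_eq_zero] at hy'
    exact hD r x hy' hr
  have hQuotFlatV : ∀ n, Module.Flat R (C ⧸ V n) := fun n => hQuotFlat (V n) (hElemV n)
  have hQuotFlatW : ∀ n, Module.Flat R (C ⧸ (S ⊓ V n)) := by
    intro n
    apply hQuotFlat
    intro r x h hr
    exact ⟨hElemS r x h.1 hr, hElemV n r x h.2 hr⟩
  -- zero composition
  have hms : ∀ (D : Submodule R C), (D.mkQ ∘ₗ D.subtype) = 0 := by
    intro D; ext y; exact (Submodule.Quotient.mk_eq_zero _).mpr y.2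
  -- range facts for subcoalgebras
  have hr1 : ∀ (D : Submodule R C) (t : C ⊗[R] C),
      t ∈ LinearMap.range (TensorProduct.map D.subtype D.subtype) →
      t ∈ LinearMap.range (LinearMap.rTensor C D.subtype) := by
    rintro D t ⟨d, rfl⟩
    exact ⟨LinearMap.lTensor ↥D D.subtype d, by
      rw [← LinearMap.comp_apply, LinearMap.rTensor_comp_lTensor]⟩
  have hr2 : ∀ (D : Submodule R C) (t : C ⊗[R] C),
      t ∈ LinearMap.range (TensorProduct.map D.subtype D.subtype) →
      t ∈ LinearMap.range (LinearMap.lTensor C D.subtype) := by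
    rintro D t ⟨d, rfl⟩
    exact ⟨LinearMap.rTensor ↥D D.subtype d, by
      rw [← LinearMap.comp_apply, LinearMap.lTensor_comp_rTensor]⟩
  have hk1 : ∀ (D : Submodule R C) (t : C ⊗[R] C),
      t ∈ LinearMap.range (LinearMap.rTensor C D.subtype) →
      LinearMap.rTensor C D.mkQ t = 0 := by
    rintro D t ⟨w, rfl⟩
    rw [← LinearMap.comp_apply, ← LinearMap.rTensor_comp, hms, LinearMap.rTensor_zero,
      LinearMap.zero_apply]
  have hk2 : ∀ (D : Submodule R C) (t : C ⊗[R] C),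
      t ∈ LinearMap.range (LinearMap.lTensor C D.subtype) →
      LinearMap.lTensor C D.mkQ t = 0 := by
    rintro D t ⟨w, rfl⟩
    rw [← LinearMap.comp_apply, ← LinearMap.lTensor_comp, hms, LinearMap.lTensor_zero,
      LinearMap.zero_apply]
  -- S ⊓ V n is a subcoalgebra
  have hWsub : ∀ n, IsSubcoalg (S ⊓ V n) := by
    intro n x hx
    haveI := hQuotFlatV n
    haveI := hQuotFlatW n
    obtain hxs := hSsub x hx.1
    obtain hxv := hsub n x hx.2
    have h1 := hr1 S _ hxs
    have h2 : LinearMap.rTensor C (V n).mkQ (Coalgebra.comul (R := R) x) = 0 :=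
      hk1 (V n) _ (hr1 (V n) _ hxv)
    have h3 := mem_range_rTensor_inf S (V n) h1 h2
    have h4 := hr2 S _ hxs
    have h5 : LinearMap.lTensor C (V n).mkQ (Coalgebra.comul (R := R) x) = 0 :=
      hk2 (V n) _ (hr2 (V n) _ hxv)
    have h6 := mem_range_lTensor_inf S (V n) h4 h5
    have h7 : LinearMap.lTensor C (S ⊓ V n).mkQ (Coalgebra.comul (R := R) x) = 0 :=
      hk2 (S ⊓ V n) _ h6
    exact mem_range_map_of_mem (S ⊓ V n) (S ⊓ V n) h3 h7
  -- S ⊓ V n is pure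
  have hWpure : ∀ n, IsPureSubmodule (S ⊓ V n) := by
    intro n A _ _
    haveI := hQuotFlatW n
    exact inj_rTensor_of_flat_quot (S ⊓ V n)
  -- dichotomy
  have hdich : ∀ n, S ⊓ V n = ⊥ ∨ S ≤ V n := by
    intro n
    rcases hSsimple (S ⊓ V n) (hWpure n) (hWsub n) inf_le_left with h | h
    · exact Or.inl h
    · exact Or.inr (inf_eq_left.mp h)
  -- existence of n with S ≤ V n
  obtain ⟨x0, hx0S, hx0ne⟩ := S.ne_bot_iff.mp hSne
  have hx0top : x0 ∈ ⨆ n, V n := by rw [hexh]; trivial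
  obtain ⟨n0, hx0n⟩ := (Submodule.mem_iSup_of_directed V hmono.directed_le).mp hx0top
  have hex : ∃ n, S ≤ V n := by
    rcases hdich n0 with h | h
    · exfalso
      apply hx0ne
      have hmem : x0 ∈ S ⊓ V n0 := ⟨hx0S, hx0n⟩
      rw [h] at hmem
      simpa using hmem
    · exact ⟨n0, h⟩
  have hspec : S ≤ V (Nat.find hex) := Nat.find_spec hex
  by_cases h0 : Nat.find hex = 0
  · rwa [h0] at hspec
  obtain ⟨m, hm⟩ := Nat.exists_eq_succ_of_ne_zero h0
  have hnot : ¬ S ≤ V m := Nat.find_min hex (by omega)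
  have hTm : S ⊓ V m = ⊥ := (hdich m).resolve_right hnot
  have hT0 : S ⊓ V 0 = ⊥ := by
    rw [← le_bot_iff, ← hTm]
    exact inf_le_inf_left S (hmono (Nat.zero_le m))
  exfalso
  apply hSne
  rw [eq_bot_iff]
  intro x hx
  rw [Submodule.mem_bot]
  -- x lies in the wedge
  have hxw : x ∈ wedge (V m) (V 0) := hwedge m (by
    rw [hm] at hspec
    exact hspec hx)
  have hΔ0 : (TensorProduct.map (V m).mkQ (V 0).mkQ) (Coalgebra.comul (R := R) x) = 0 := by
    have := LinearMap.mem_ker.mp hxw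
    rwa [LinearMap.comp_apply] at this
  obtain ⟨s, hs⟩ := hSsub x hx
  set f' : ↥S →ₗ[R] C ⧸ (V m) := (V m).mkQ ∘ₗ S.subtype with hf'
  set g' : ↥S →ₗ[R] C ⧸ (V 0) := (V 0).mkQ ∘ₗ S.subtype with hg'
  have hinj_aux : ∀ (D : Submodule R C), S ⊓ D = ⊥ →
      Function.Injective (D.mkQ ∘ₗ S.subtype) := by
    intro D hD a b hab
    have h1 : (a : C) - (b : C) ∈ D := by
      rw [LinearMap.comp_apply, LinearMap.comp_apply] at hab
      exact (Submodule.Quotient.eq D).mp hab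
    have h2 : (a : C) - (b : C) ∈ S ⊓ D := ⟨sub_mem a.2 b.2, h1⟩
    rw [hD] at h2
    exact Subtype.ext (sub_eq_zero.mp (by simpa using h2))
  have hfinj : Function.Injective f' := hinj_aux (V m) hTm
  have hginj : Function.Injective g' := hinj_aux (V 0) hT0
  haveI := hQuotFlatV m
  have hinj : Function.Injective (TensorProduct.map f' g') := by
    have h1 : Function.Injective (LinearMap.rTensor ↥S f') :=
      Module.Flat.rTensor_preserves_injective_linearMap f' hfinj
    have h2 : Function.Injective (LinearMap.lTensor (C ⧸ V m) g') :=
      Module.Flat.lTensor_preserves_injective_linearMap g' hginj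
    have heq : TensorProduct.map f' g' =
        (LinearMap.lTensor (C ⧸ V m) g') ∘ₗ (LinearMap.rTensor ↥S f') := by
      rw [LinearMap.lTensor_comp_rTensor]
    rw [heq, LinearMap.coe_comp]
    exact h2.comp h1
  have hs0 : TensorProduct.map f' g' s = 0 := by
    have heq : TensorProduct.map f' g' =
        (TensorProduct.map (V m).mkQ (V 0).mkQ).comp
          (TensorProduct.map S.subtype S.subtype) := by
      rw [← TensorProduct.map_comp]
    rw [heq, LinearMap.comp_apply, hs, hΔ0]
  have hsz : s = 0 := hinj (by rw [hs0, map_zero])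
  have hΔz : Coalgebra.comul (R := R) x = 0 := by rw [← hs, hsz, map_zero]
  have hcx := Coalgebra.rTensor_counit_comul (R := R) x
  rw [hΔz, map_zero] at hcx
  have := congrArg (TensorProduct.lid R C) hcx
  simpa using this.symm
end
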